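/- arXiv:1804.05135 — 5 statements merged into one kernel-verified Lean document; each statement's English description precedes it below -/
import Mathlib

section
/- Let n ∈ S. Then ν(n + t) = ν(n) + 1, where t is the trade element of S. (Equivalently: adding the trade element to any semigroup element increases the mode frequency by exactly 1.) -/
/-- The (finite) set of factorizations of `n` in the numerical semigroup `⟨n₁, n₂, n₃⟩`:
triples `(a₁, a₂, a₃) ∈ ℕ³` with `a₁n₁ + a₂n₂ + a₃n₃ = n`.  (Each coordinate is at most `n`
whenever the generators are positive, so the bounding box `[0,n]³` captures all of them.) -/
def Zf (n₁ n₂ n₃ n : ℕ) : Finset (ℕ × ℕ × ℕ) :=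
  (Finset.range (n + 1) ×ˢ Finset.range (n + 1) ×ˢ Finset.range (n + 1)).filter
    (fun a => a.1 * n₁ + a.2.1 * n₂ + a.2.2 * n₃ = n)

/-- The length of a factorization. -/
def len (a : ℕ × ℕ × ℕ) : ℕ := a.1 + a.2.1 + a.2.2

/-- Membership in the numerical semigroup `⟨n₁, n₂, n₃⟩`. -/
def inS (n₁ n₂ n₃ n : ℕ) : Prop := ∃ a₁ a₂ a₃ : ℕ, a₁ * n₁ + a₂ * n₂ + a₃ * n₃ = n

/-- `fmul n₁ n₂ n₃ n ℓ` is the number of factorizations of `n` having length `ℓ`. -/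
def fmul (n₁ n₂ n₃ n ℓ : ℕ) : ℕ := ((Zf n₁ n₂ n₃ n).filter (fun a => len a = ℓ)).card

/-- The mode frequency `ν(n)`: the maximum, over all lengths `ℓ ∈ ℕ`, of the number of
factorizations of `n` of length `ℓ`. -/
noncomputable def modeFreq (n₁ n₂ n₃ n : ℕ) : ℕ := sSup (Set.range (fmul n₁ n₂ n₃ n))

/-- The set `γ(n)` of mode factorization lengths. -/
def modeSet (n₁ n₂ n₃ n : ℕ) : Set ℕ := {ℓ | fmul n₁ n₂ n₃ n ℓ = modeFreq n₁ n₂ n₃ n}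

/-- The mean factorization length `μ(n)`. -/
def meanLen (n₁ n₂ n₃ n : ℕ) : ℚ :=
  (∑ z ∈ Zf n₁ n₂ n₃ n, (len z : ℚ)) / ((Zf n₁ n₂ n₃ n).card : ℚ)

/-- The lengths of all factorizations of `n`, counted with multiplicity, in nondecreasing
order. -/
def sortedLengths (n₁ n₂ n₃ n : ℕ) : List ℕ :=
  Multiset.sort ((Zf n₁ n₂ n₃ n).val.map len) (· ≤ ·)

/-- The median factorization length `η(n)`: with the lengths listed with multiplicity in
nondecreasing order as `ℓ₁ ≤ ⋯ ≤ ℓ_M`, it is `ℓ_{(M+1)/2}` for odd `M` and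
`(ℓ_{M/2} + ℓ_{M/2+1})/2` for even `M`. -/
def medianLen (n₁ n₂ n₃ n : ℕ) : ℚ :=
  let l := sortedLengths n₁ n₂ n₃ n
  if l.length % 2 = 1 then (l.getD (l.length / 2) 0 : ℚ)
  else ((l.getD (l.length / 2 - 1) 0 : ℚ) + (l.getD (l.length / 2) 0 : ℚ)) / 2

/-!
Write `n₂ - n₁ = δ d₁` and `n₃ - n₂ = δ d₂` with `d₁, d₂` coprime and put `T = d₁ + d₂`; then
`t = T n₂` and `d₂ n₁ + d₁ n₃ = T n₂`. Two factorizations of the same element with the same length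
differ by an integer multiple of the trade vector `(d₂, -T, d₁)`, so for each length there is at most
one factorization with `a₂ < T`. A factorization of `n + t` with `a₂ ≥ T` is `(a₁, a₂ + T, a₃)` for a
factorization of `n` of length shorter by `T`; hence `f_{n+t}(ℓ) ≤ f_n(ℓ - T) + 1`. Conversely, if
`f_n(ℓ) > 0`, trading down any factorization of `n + t` of length `ℓ + T` yields one with `a₂ < T`,
so `f_{n+t}(ℓ + T) ≥ f_n(ℓ) + 1`. Comparing at mode lengths gives `ν(n + t) = ν(n) + 1`.
-/

lemma mem_Zf_iff {n₁ n₂ n₃ n : ℕ} (h₁ : 0 < n₁) (h₂ : 0 < n₂) (h₃ : 0 < n₃)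
    {a : ℕ × ℕ × ℕ} : a ∈ Zf n₁ n₂ n₃ n ↔ a.1 * n₁ + a.2.1 * n₂ + a.2.2 * n₃ = n := by
  simp only [Zf, Finset.mem_filter, Finset.mem_product, Finset.mem_range, and_iff_right_iff_imp]
  intro h
  refine ⟨?_, ?_, ?_⟩ <;> nlinarith

lemma mem_Zf_add_mul_iff {n₁ n₂ n₃ n : ℕ} (h₁ : 0 < n₁) (h₂ : 0 < n₂) (h₃ : 0 < n₃)
    (k : ℕ) {a : ℕ × ℕ × ℕ} :
    (a.1, a.2.1 + k, a.2.2) ∈ Zf n₁ n₂ n₃ (n + k * n₂) ↔ a ∈ Zf n₁ n₂ n₃ n := by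
  rw [mem_Zf_iff h₁ h₂ h₃, mem_Zf_iff h₁ h₂ h₃, add_mul]
  dsimp only
  omega

section ModeFreq

variable (n₁ n₂ n₃ n : ℕ)

lemma bddAbove_range_fmul : BddAbove (Set.range (fmul n₁ n₂ n₃ n)) :=
  ⟨(Zf n₁ n₂ n₃ n).card, Set.forall_mem_range.2 fun _ => Finset.card_filter_le _ _⟩

lemma fmul_le_modeFreq (ℓ : ℕ) : fmul n₁ n₂ n₃ n ℓ ≤ modeFreq n₁ n₂ n₃ n :=
  le_csSup (bddAbove_range_fmul n₁ n₂ n₃ n) ⟨ℓ, rfl⟩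

lemma exists_fmul_eq_modeFreq : ∃ ℓ, fmul n₁ n₂ n₃ n ℓ = modeFreq n₁ n₂ n₃ n :=
  Nat.sSup_mem (Set.range_nonempty _) (bddAbove_range_fmul n₁ n₂ n₃ n)

end ModeFreq

lemma modeFreq_pos {n₁ n₂ n₃ n : ℕ} (h₁ : 0 < n₁) (h₂ : 0 < n₂) (h₃ : 0 < n₃)
    (hn : inS n₁ n₂ n₃ n) : 0 < modeFreq n₁ n₂ n₃ n := by
  obtain ⟨a₁, a₂, a₃, ha⟩ := hn
  have hmem : (a₁, a₂, a₃) ∈ Zf n₁ n₂ n₃ n := (mem_Zf_iff h₁ h₂ h₃).2 ha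
  have hpos : 0 < fmul n₁ n₂ n₃ n (len (a₁, a₂, a₃)) :=
    Finset.card_pos.2 ⟨_, Finset.mem_filter.2 ⟨hmem, rfl⟩⟩
  exact hpos.trans_le (fmul_le_modeFreq n₁ n₂ n₃ n _)

section Trade

variable {n₁ n₂ n₃ d₁ d₂ : ℕ}

lemma exists_sub_eq_mul_trade (htrade : d₂ * n₁ + d₁ * n₃ = (d₁ + d₂) * n₂) (h₁₂ : n₁ < n₂)
    (hco : d₁.Coprime d₂) (hd₂ : d₂ ≠ 0) {a b : ℕ × ℕ × ℕ}
    (hval : a.1 * n₁ + a.2.1 * n₂ + a.2.2 * n₃ = b.1 * n₁ + b.2.1 * n₂ + b.2.2 * n₃)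
    (hlen : len a = len b) :
    ∃ k : ℤ, (a.1 : ℤ) - b.1 = k * d₂ ∧ (a.2.1 : ℤ) - b.2.1 = -k * (d₁ + d₂) ∧
      (a.2.2 : ℤ) - b.2.2 = k * d₁ := by
  unfold len at hlen
  zify at htrade hval hlen
  have hcross : ((n₂ : ℤ) - n₁) * (((a.1 : ℤ) - b.1) * d₁ - ((a.2.2 : ℤ) - b.2.2) * d₂) = 0 := by
    linear_combination (-(d₁ : ℤ)) * hval + (d₁ * n₂ : ℤ) * hlen
      + ((a.2.2 : ℤ) - b.2.2) * htrade
  have hx : ((a.1 : ℤ) - b.1) * d₁ = ((a.2.2 : ℤ) - b.2.2) * d₂ := by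
    have : (n₂ : ℤ) - n₁ ≠ 0 := by omega
    linarith [(mul_eq_zero.1 hcross).resolve_left this]
  obtain ⟨k, hk⟩ : (d₂ : ℤ) ∣ (a.1 : ℤ) - b.1 :=
    (Int.isCoprime_iff_gcd_eq_one.2 (by simpa using hco.symm)).dvd_of_dvd_mul_right
      ⟨_, hx.trans (mul_comm _ _)⟩
  have hz : (a.2.2 : ℤ) - b.2.2 = k * d₁ := by
    apply mul_right_cancel₀ (Int.natCast_ne_zero.2 hd₂)
    linear_combination -hx + (d₁ : ℤ) * hk
  exact ⟨k, by linarith, by linarith, hz⟩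

lemma eq_of_snd_lt_of_len_eq (htrade : d₂ * n₁ + d₁ * n₃ = (d₁ + d₂) * n₂) (h₁₂ : n₁ < n₂)
    (hco : d₁.Coprime d₂) (hd₂ : d₂ ≠ 0) {a b : ℕ × ℕ × ℕ}
    (hval : a.1 * n₁ + a.2.1 * n₂ + a.2.2 * n₃ = b.1 * n₁ + b.2.1 * n₂ + b.2.2 * n₃)
    (hlen : len a = len b) (ha : a.2.1 < d₁ + d₂) (hb : b.2.1 < d₁ + d₂) : a = b := by
  obtain ⟨k, h₁, h₂, h₃⟩ := exists_sub_eq_mul_trade htrade h₁₂ hco hd₂ hval hlen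
  have hk : k = 0 := by
    rcases lt_trichotomy k 0 with hk | hk | hk
    · nlinarith
    · exact hk
    · nlinarith
  subst hk
  ext <;> omega

lemma exists_snd_lt_of_trade (htrade : d₂ * n₁ + d₁ * n₃ = (d₁ + d₂) * n₂)
    (hT : 0 < d₁ + d₂) (a : ℕ × ℕ × ℕ) :
    ∃ b : ℕ × ℕ × ℕ, b.1 * n₁ + b.2.1 * n₂ + b.2.2 * n₃ = a.1 * n₁ + a.2.1 * n₂ + a.2.2 * n₃ ∧
      len b = len a ∧ b.2.1 < d₁ + d₂ := by
  set q := a.2.1 / (d₁ + d₂)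
  have hdiv : a.2.1 % (d₁ + d₂) + (d₁ + d₂) * q = a.2.1 := Nat.mod_add_div _ _
  refine ⟨(a.1 + q * d₂, a.2.1 % (d₁ + d₂), a.2.2 + q * d₁), ?_, ?_, Nat.mod_lt _ hT⟩
  · linear_combination q * htrade + n₂ * hdiv
  · unfold len
    linear_combination hdiv

lemma fmul_add_trade_le (h₀ : 0 < n₁) (h₁₂ : n₁ < n₂) (h₃ : 0 < n₃)
    (htrade : d₂ * n₁ + d₁ * n₃ = (d₁ + d₂) * n₂) (hco : d₁.Coprime d₂) (hd₂ : d₂ ≠ 0)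
    (n ℓ : ℕ) :
    fmul n₁ n₂ n₃ (n + (d₁ + d₂) * n₂) ℓ ≤ fmul n₁ n₂ n₃ n (ℓ - (d₁ + d₂)) + 1 := by
  have h₂ : 0 < n₂ := h₀.trans h₁₂
  set T := d₁ + d₂
  rw [fmul, ← Finset.card_filter_add_card_filter_not (fun a => T ≤ a.2.1)]
  gcongr
  · refine Finset.card_le_card_of_injOn (fun a => (a.1, a.2.1 - T, a.2.2)) ?_ ?_
    · intro a ha
      simp only [Finset.mem_coe, Finset.mem_filter] at ha
      obtain ⟨⟨ha, hlen⟩, hle⟩ := ha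
      obtain ⟨a₁, a₂, a₃⟩ := a
      dsimp only at hle
      rw [← Nat.sub_add_cancel hle] at ha
      simp only [Finset.mem_coe, Finset.mem_filter]
      exact ⟨(mem_Zf_add_mul_iff h₀ h₂ h₃ T (a := (a₁, a₂ - T, a₃))).1 ha,
        by simp only [len] at hlen ⊢; omega⟩
    · rintro ⟨a₁, a₂, a₃⟩ ha ⟨b₁, b₂, b₃⟩ hb hab
      simp only [Finset.mem_coe, Finset.mem_filter, Prod.mk.injEq] at ha hb hab ⊢
      omega
  · refine Finset.card_le_one.2 fun a ha b hb => ?_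
    simp only [Finset.mem_filter, mem_Zf_iff h₀ h₂ h₃, not_le] at ha hb
    exact eq_of_snd_lt_of_len_eq htrade h₁₂ hco hd₂ (ha.1.1.trans hb.1.1.symm)
      (ha.1.2.trans hb.1.2.symm) ha.2 hb.2

lemma fmul_add_one_le_fmul_add_trade (h₀ : 0 < n₁) (h₂ : 0 < n₂) (h₃ : 0 < n₃)
    (htrade : d₂ * n₁ + d₁ * n₃ = (d₁ + d₂) * n₂) (hT : 0 < d₁ + d₂) {n ℓ : ℕ}
    (hpos : 0 < fmul n₁ n₂ n₃ n ℓ) :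
    fmul n₁ n₂ n₃ n ℓ + 1 ≤ fmul n₁ n₂ n₃ (n + (d₁ + d₂) * n₂) (ℓ + (d₁ + d₂)) := by
  set T := d₁ + d₂ with hTdef
  set shift : ℕ × ℕ × ℕ → ℕ × ℕ × ℕ := fun a => (a.1, a.2.1 + T, a.2.2)
  have hshift : ∀ a ∈ (Zf n₁ n₂ n₃ n).filter (fun a => len a = ℓ),
      shift a ∈ (Zf n₁ n₂ n₃ (n + T * n₂)).filter (fun a => len a = ℓ + T) := by
    intro a ha
    rw [Finset.mem_filter] at ha ⊢
    exact ⟨(mem_Zf_add_mul_iff h₀ h₂ h₃ T).2 ha.1, by simp only [shift, len] at ha ⊢; omega⟩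
  obtain ⟨a, ha⟩ := Finset.card_pos.1 hpos
  -- trading down the shift of `a` gives a factorization outside the image of `shift`
  obtain ⟨b, hval, hlen, hb⟩ := exists_snd_lt_of_trade htrade hT (shift a)
  have hbmem : b ∈ (Zf n₁ n₂ n₃ (n + T * n₂)).filter (fun a => len a = ℓ + T) := by
    have := hshift a ha
    rw [Finset.mem_filter, mem_Zf_iff h₀ h₂ h₃] at this ⊢
    exact ⟨hval.trans this.1, hlen.trans this.2⟩
  have hbnot : b ∉ ((Zf n₁ n₂ n₃ n).filter (fun a => len a = ℓ)).image shift := by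
    rw [Finset.mem_image]
    rintro ⟨c, -, rfl⟩
    exact absurd hb (by simp only [shift]; omega)
  calc fmul n₁ n₂ n₃ n ℓ + 1
      = (insert b (((Zf n₁ n₂ n₃ n).filter (fun a => len a = ℓ)).image shift)).card := by
        rw [Finset.card_insert_of_notMem hbnot, Finset.card_image_of_injective]
        · rfl
        · rintro ⟨a₁, a₂, a₃⟩ ⟨b₁, b₂, b₃⟩ h
          simpa [shift] using h
    _ ≤ fmul n₁ n₂ n₃ (n + T * n₂) (ℓ + T) :=
        Finset.card_le_card (Finset.insert_subset hbmem (Finset.image_subset_iff.2 hshift))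

theorem modeFreq_add_trade (h₀ : 0 < n₁) (h₁₂ : n₁ < n₂) (h₃ : 0 < n₃)
    (htrade : d₂ * n₁ + d₁ * n₃ = (d₁ + d₂) * n₂) (hco : d₁.Coprime d₂) (hd₂ : d₂ ≠ 0)
    {n : ℕ} (hn : inS n₁ n₂ n₃ n) :
    modeFreq n₁ n₂ n₃ (n + (d₁ + d₂) * n₂) = modeFreq n₁ n₂ n₃ n + 1 := by
  have h₂ : 0 < n₂ := h₀.trans h₁₂
  obtain ⟨ℓ, hℓ⟩ := exists_fmul_eq_modeFreq n₁ n₂ n₃ n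
  obtain ⟨ℓ', hℓ'⟩ := exists_fmul_eq_modeFreq n₁ n₂ n₃ (n + (d₁ + d₂) * n₂)
  apply le_antisymm
  · calc modeFreq n₁ n₂ n₃ (n + (d₁ + d₂) * n₂)
        = fmul n₁ n₂ n₃ (n + (d₁ + d₂) * n₂) ℓ' := hℓ'.symm
      _ ≤ fmul n₁ n₂ n₃ n (ℓ' - (d₁ + d₂)) + 1 :=
        fmul_add_trade_le h₀ h₁₂ h₃ htrade hco hd₂ n ℓ'
      _ ≤ modeFreq n₁ n₂ n₃ n + 1 := Nat.add_le_add_right (fmul_le_modeFreq ..) 1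
  · calc modeFreq n₁ n₂ n₃ n + 1 = fmul n₁ n₂ n₃ n ℓ + 1 := by rw [hℓ]
      _ ≤ fmul n₁ n₂ n₃ (n + (d₁ + d₂) * n₂) (ℓ + (d₁ + d₂)) :=
        fmul_add_one_le_fmul_add_trade h₀ h₂ h₃ htrade (by omega)
          (hℓ ▸ modeFreq_pos h₀ h₂ h₃ hn)
      _ ≤ modeFreq n₁ n₂ n₃ (n + (d₁ + d₂) * n₂) := fmul_le_modeFreq ..

end Trade

lemma exists_coprime_trade {n₁ n₂ n₃ : ℕ} (h₁ : n₁ < n₂) (h₂ : n₂ < n₃) :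
    ∃ d₁ d₂ : ℕ, d₁.Coprime d₂ ∧ d₂ ≠ 0 ∧ d₂ * n₁ + d₁ * n₃ = (d₁ + d₂) * n₂ ∧
      n₂ * (n₃ - n₁) / Nat.gcd (n₂ - n₁) (n₃ - n₂) = (d₁ + d₂) * n₂ := by
  set g := Nat.gcd (n₂ - n₁) (n₃ - n₂)
  have hg : 0 < g := Nat.gcd_pos_of_pos_left _ (by omega)
  obtain ⟨d₁, hd₁⟩ : g ∣ n₂ - n₁ := Nat.gcd_dvd_left _ _
  obtain ⟨d₂, hd₂⟩ : g ∣ n₃ - n₂ := Nat.gcd_dvd_right _ _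
  have hco : d₁.Coprime d₂ := by
    apply Nat.eq_of_mul_eq_mul_left hg
    rw [← Nat.gcd_mul_left, ← hd₁, ← hd₂, mul_one]
  refine ⟨d₁, d₂, hco, ?_, ?_, ?_⟩
  · rintro rfl
    omega
  · apply Nat.eq_of_mul_eq_mul_left hg
    zify [h₁.le, h₂.le] at hd₁ hd₂ ⊢
    linear_combination (-((n₃ : ℤ) - n₂)) * hd₁ + ((n₂ : ℤ) - n₁) * hd₂
  · rw [show n₃ - n₁ = g * (d₁ + d₂) by rw [mul_add]; omega, mul_left_comm,
      Nat.mul_div_cancel_left _ hg, mul_comm]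

theorem mode_freq_add_trade_general (n₁ n₂ n₃ : ℕ) (h₀ : 0 < n₁) (h₁ : n₁ < n₂) (h₂ : n₂ < n₃)
    (δ t : ℕ) (hδ : δ = Nat.gcd (n₂ - n₁) (n₃ - n₂)) (ht : t = n₂ * (n₃ - n₁) / δ)
    (n : ℕ) (hn : inS n₁ n₂ n₃ n) :
    modeFreq n₁ n₂ n₃ (n + t) = modeFreq n₁ n₂ n₃ n + 1 := by
  obtain ⟨d₁, d₂, hco, hd₂, htrade, htd⟩ := exists_coprime_trade h₁ h₂
  rw [ht, hδ, htd]
  exact modeFreq_add_trade h₀ h₁ (by omega) htrade hco hd₂ hn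

/-- Adding the trade element t to any semigroup element increases the mode
frequency by exactly 1: ν(n + t) = ν(n) + 1. -/
theorem mode_freq_add_trade (n₁ n₂ n₃ : ℕ) (h₀ : 0 < n₁) (h₁ : n₁ < n₂) (h₂ : n₂ < n₃)
    (hg : Nat.gcd n₁ (Nat.gcd n₂ n₃) = 1)
    (δ t : ℕ) (hδ : δ = Nat.gcd (n₂ - n₁) (n₃ - n₂)) (ht : t = n₂ * (n₃ - n₁) / δ)
    (n : ℕ) (hn : inS n₁ n₂ n₃ n) :
    modeFreq n₁ n₂ n₃ (n + t) = modeFreq n₁ n₂ n₃ n + 1 :=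
  mode_freq_add_trade_general n₁ n₂ n₃ h₀ h₁ h₂ δ t hδ ht n hn
end

section
/- Let s = δ·t·n₁n₂n₃, let k ≥ 1, and set a_k = ks/n₃ = kδtn₁n₂, c_k = ks/n₂ = kδtn₁n₃, b_k = ks/n₁ = kδtn₂n₃. Then for every integer x: (1) if a_k ≤ x ≤ c_k, the number of factorizations of ks of length x satisfies f_{ks}(x) ≤ (n₂n₃/(t(n₃−n₂)))·(x − a_k) + 1; (2) if c_k ≤ x ≤ b_k, then f_{ks}(x) ≤ (n₁n₂/(t(n₂−n₁)))·(b_k − x) + 1. -/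
/-! Among the factorizations of `N` of length `x`, one coordinate is determined by the other
two, which then solve a single equation `u p + v q = M`: either `M = n₃ x - N` with
`(p, q) = (n₃ - n₁, n₃ - n₂)`, or `M = N - n₁ x` with `(p, q) = (n₃ - n₁, n₂ - n₁)`. The
`v`-coordinates of its solutions in `ℕ²` lie in `[0, M / q]` and are pairwise congruent modulo
`p / gcd p q`, so there are at most `M / lcm p q + 1` of them. For `N = ks` we get
`M = n₃ (x - aₖ)` resp. `M = n₁ (bₖ - x)`, and in both cases `gcd p q = δ`, whence
`t q = n₂ lcm p q`. -/

theorem Finset.card_le_div_add_one_of_modEq {S : Finset ℕ} {m B : ℕ}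
    (hmod : ∀ a ∈ S, ∀ b ∈ S, a ≡ b [MOD m]) (hB : ∀ a ∈ S, a ≤ B) :
    S.card ≤ B / m + 1 := by
  have hinj : Set.InjOn (· / m) S := fun a ha b hb (hab : a / m = b / m) =>
    calc a = m * (a / m) + a % m := (Nat.div_add_mod a m).symm
      _ = m * (b / m) + b % m := by rw [hab, hmod a ha b hb]
      _ = b := Nat.div_add_mod b m
  have hmaps : ∀ a ∈ S, a / m ∈ Finset.range (B / m + 1) := fun a ha =>
    Finset.mem_range_succ_iff.mpr (Nat.div_le_div_right (hB a ha))
  simpa using Finset.card_le_card_of_injOn _ hmaps hinj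

theorem card_le_div_lcm_add_one {T : Finset (ℕ × ℕ)} {p q M : ℕ} (hp : 0 < p) (hq : 0 < q)
    (hT : ∀ uv ∈ T, uv.1 * p + uv.2 * q = M) :
    T.card ≤ M / Nat.lcm p q + 1 := by
  have hinj : Set.InjOn Prod.snd (T : Set (ℕ × ℕ)) := by
    intro a ha b hb (hab : a.2 = b.2)
    have ha' := hT a ha
    have hb' := hT b hb
    rw [hab] at ha'
    exact Prod.ext (Nat.eq_of_mul_eq_mul_right hp (by omega)) hab
  have hmod : ∀ v ∈ T.image Prod.snd, ∀ w ∈ T.image Prod.snd, v ≡ w [MOD p / Nat.gcd p q] := by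
    simp only [Finset.mem_image]
    rintro _ ⟨a, ha, rfl⟩ _ ⟨b, hb, rfl⟩
    refine Nat.ModEq.cancel_right_div_gcd hp ?_
    calc a.2 * q ≡ a.1 * p + a.2 * q [MOD p] := (Nat.mul_add_mod' _ _ _).symm
      _ = b.1 * p + b.2 * q := by rw [hT a ha, hT b hb]
      _ ≡ b.2 * q [MOD p] := Nat.mul_add_mod' _ _ _
  have hB : ∀ v ∈ T.image Prod.snd, v ≤ M / q := by
    simp only [Finset.mem_image]
    rintro _ ⟨a, ha, rfl⟩
    exact (Nat.le_div_iff_mul_le hq).mpr (by have := hT a ha; omega)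
  have hlcm : q * (p / Nat.gcd p q) = Nat.lcm p q := by
    rw [mul_comm, Nat.div_mul_right_comm (Nat.gcd_dvd_left p q)]
    rfl
  have := Finset.card_le_div_add_one_of_modEq hmod hB
  rwa [Finset.card_image_of_injOn hinj, Nat.div_div_eq_div_mul, hlcm] at this

theorem Nat.mul_div_gcd_mul_eq_mul_lcm (c a b : ℕ) :
    c * a / Nat.gcd a b * b = c * Nat.lcm a b := by
  rw [Nat.mul_div_assoc c (Nat.gcd_dvd_left a b), mul_assoc,
    Nat.div_mul_right_comm (Nat.gcd_dvd_left a b)]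
  rfl

theorem cast_le_mul_div_mul_add_one {f c n y L t Q : ℕ} (hc : 0 < c) (htQ : t * Q = c * L)
    (h : f ≤ n * y / L + 1) :
    (f : ℚ) ≤ (c : ℚ) * n / ((t : ℚ) * Q) * y + 1 := by
  have htQ' : (t : ℚ) * Q = c * L := by exact_mod_cast htQ
  rw [htQ']
  rcases L.eq_zero_or_pos with rfl | hL
  · simp only [Nat.div_zero, zero_add] at h
    simpa using h
  calc (f : ℚ) ≤ ((n * y / L : ℕ) : ℚ) + 1 := by exact_mod_cast h
    _ ≤ ((n * y : ℕ) : ℚ) / L + 1 := by gcongr; exact Nat.cast_div_le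
    _ = (c : ℚ) * n / (c * L) * y + 1 := by push_cast; field_simp

theorem sum_eq_and_len_eq_of_mem_filter_len {n₁ n₂ n₃ N x : ℕ} {a : ℕ × ℕ × ℕ}
    (ha : a ∈ (Zf n₁ n₂ n₃ N).filter (fun a => len a = x)) :
    a.1 * n₁ + a.2.1 * n₂ + a.2.2 * n₃ = N ∧ a.1 + a.2.1 + a.2.2 = x := by
  rw [Finset.mem_filter, Zf, Finset.mem_filter] at ha
  exact ⟨ha.1.2, ha.2⟩

theorem fmul_le_of_le_mul_n₃ {n₁ n₂ n₃ N x : ℕ} (h₁₃ : n₁ < n₃) (h₂₃ : n₂ < n₃)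
    (hN : N ≤ n₃ * x) :
    fmul n₁ n₂ n₃ N x ≤ (n₃ * x - N) / Nat.lcm (n₃ - n₁) (n₃ - n₂) + 1 := by
  set F := (Zf n₁ n₂ n₃ N).filter (fun a => len a = x)
  have hinj : Set.InjOn (fun a : ℕ × ℕ × ℕ => (a.1, a.2.1)) F := by
    intro a ha b hb hab
    obtain ⟨-, ha⟩ := sum_eq_and_len_eq_of_mem_filter_len ha
    obtain ⟨-, hb⟩ := sum_eq_and_len_eq_of_mem_filter_len hb
    simp only [Prod.mk.injEq] at hab
    exact Prod.ext hab.1 (Prod.ext hab.2 (by omega))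
  have hcount := card_le_div_lcm_add_one (T := F.image fun a => (a.1, a.2.1))
    (p := n₃ - n₁) (q := n₃ - n₂) (M := n₃ * x - N) (by omega) (by omega) <| by
      simp only [Finset.mem_image]
      rintro _ ⟨a, ha, rfl⟩
      obtain ⟨hsum, hlen⟩ := sum_eq_and_len_eq_of_mem_filter_len ha
      zify [h₁₃.le, h₂₃.le, hN] at hsum hlen ⊢
      linear_combination (n₃ : ℤ) * hlen - hsum
  rwa [Finset.card_image_of_injOn hinj] at hcount

theorem fmul_le_of_n₁_mul_le {n₁ n₂ n₃ N x : ℕ} (h₁₂ : n₁ < n₂) (h₁₃ : n₁ < n₃)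
    (hN : n₁ * x ≤ N) :
    fmul n₁ n₂ n₃ N x ≤ (N - n₁ * x) / Nat.lcm (n₃ - n₁) (n₂ - n₁) + 1 := by
  set F := (Zf n₁ n₂ n₃ N).filter (fun a => len a = x)
  have hinj : Set.InjOn (fun a : ℕ × ℕ × ℕ => (a.2.2, a.2.1)) F := by
    intro a ha b hb hab
    obtain ⟨-, ha⟩ := sum_eq_and_len_eq_of_mem_filter_len ha
    obtain ⟨-, hb⟩ := sum_eq_and_len_eq_of_mem_filter_len hb
    simp only [Prod.mk.injEq] at hab
    exact Prod.ext (by omega) (Prod.ext hab.2 hab.1)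
  have hcount := card_le_div_lcm_add_one (T := F.image fun a => (a.2.2, a.2.1))
    (p := n₃ - n₁) (q := n₂ - n₁) (M := N - n₁ * x) (by omega) (by omega) <| by
      simp only [Finset.mem_image]
      rintro _ ⟨a, ha, rfl⟩
      obtain ⟨hsum, hlen⟩ := sum_eq_and_len_eq_of_mem_filter_len ha
      zify [h₁₂.le, h₁₃.le, hN] at hsum hlen ⊢
      linear_combination hsum - (n₁ : ℤ) * hlen
  rwa [Finset.card_image_of_injOn hinj] at hcount

theorem multiplicity_upper_bound_general (n₁ n₂ n₃ : ℕ) (h₁ : n₁ < n₂) (h₂ : n₂ < n₃)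
    (δ t : ℕ) (hδ : δ = Nat.gcd (n₂ - n₁) (n₃ - n₂)) (ht : t = n₂ * (n₃ - n₁) / δ)
    (s : ℕ) (hs : s = δ * t * n₁ * n₂ * n₃) (k : ℕ)
    (aₖ cₖ bₖ : ℕ) (ha : aₖ = k * δ * t * n₁ * n₂)
    (hb : bₖ = k * δ * t * n₂ * n₃) :
    ∀ x : ℕ,
      (aₖ ≤ x → x ≤ cₖ →
        (fmul n₁ n₂ n₃ (k * s) x : ℚ) ≤
          ((n₂ : ℚ) * (n₃ : ℚ)) / ((t : ℚ) * ((n₃ : ℚ) - (n₂ : ℚ))) * ((x : ℚ) - (aₖ : ℚ)) + 1) ∧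
      (cₖ ≤ x → x ≤ bₖ →
        (fmul n₁ n₂ n₃ (k * s) x : ℚ) ≤
          ((n₁ : ℚ) * (n₂ : ℚ)) / ((t : ℚ) * ((n₂ : ℚ) - (n₁ : ℚ))) * ((bₖ : ℚ) - (x : ℚ)) + 1) := by
  have hsplit : n₃ - n₁ = (n₂ - n₁) + (n₃ - n₂) := by omega
  have hgcd₃₂ : Nat.gcd (n₃ - n₁) (n₃ - n₂) = δ := by rw [hsplit, Nat.gcd_add_self_left, hδ]
  have hgcd₂₁ : Nat.gcd (n₃ - n₁) (n₂ - n₁) = δ := by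
    rw [hsplit, Nat.gcd_self_add_left, Nat.gcd_comm, hδ]
  intro x
  constructor
  · intro hax _
    have hN : k * s = n₃ * aₖ := by rw [hs, ha]; ring
    rw [hN]
    have hcount := fmul_le_of_le_mul_n₃ (n₁ := n₁) (by omega) h₂ (Nat.mul_le_mul_left n₃ hax)
    rw [← Nat.mul_sub] at hcount
    have htL : t * (n₃ - n₂) = n₂ * Nat.lcm (n₃ - n₁) (n₃ - n₂) := by
      rw [ht, ← hgcd₃₂, Nat.mul_div_gcd_mul_eq_mul_lcm]
    have := cast_le_mul_div_mul_add_one (by omega) htL hcount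
    rwa [Nat.cast_sub h₂.le, Nat.cast_sub hax] at this
  · intro _ hxb
    have hN : k * s = n₁ * bₖ := by rw [hs, hb]; ring
    rw [hN]
    have hcount := fmul_le_of_n₁_mul_le (n₃ := n₃) h₁ (by omega) (Nat.mul_le_mul_left n₁ hxb)
    rw [← Nat.mul_sub] at hcount
    have htL : t * (n₂ - n₁) = n₂ * Nat.lcm (n₃ - n₁) (n₂ - n₁) := by
      rw [ht, ← hgcd₂₁, Nat.mul_div_gcd_mul_eq_mul_lcm]
    have := cast_le_mul_div_mul_add_one (by omega) htL hcount
    rwa [Nat.cast_sub h₁.le, Nat.cast_sub hxb, mul_comm (n₂ : ℚ)] at this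

/-- Upper bound on length multiplicities of ks: linear in x − aₖ on [aₖ, cₖ] and
linear in bₖ − x on [cₖ, bₖ]. -/
theorem multiplicity_upper_bound (n₁ n₂ n₃ : ℕ) (h₀ : 0 < n₁) (h₁ : n₁ < n₂) (h₂ : n₂ < n₃)
    (hg : Nat.gcd n₁ (Nat.gcd n₂ n₃) = 1)
    (δ t : ℕ) (hδ : δ = Nat.gcd (n₂ - n₁) (n₃ - n₂)) (ht : t = n₂ * (n₃ - n₁) / δ)
    (s : ℕ) (hs : s = δ * t * n₁ * n₂ * n₃) (k : ℕ) (hk : 1 ≤ k)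
    (aₖ cₖ bₖ : ℕ) (ha : aₖ = k * δ * t * n₁ * n₂) (hc : cₖ = k * δ * t * n₁ * n₃)
    (hb : bₖ = k * δ * t * n₂ * n₃) :
    ∀ x : ℕ,
      (aₖ ≤ x → x ≤ cₖ →
        (fmul n₁ n₂ n₃ (k * s) x : ℚ) ≤
          ((n₂ : ℚ) * (n₃ : ℚ)) / ((t : ℚ) * ((n₃ : ℚ) - (n₂ : ℚ))) * ((x : ℚ) - (aₖ : ℚ)) + 1) ∧
      (cₖ ≤ x → x ≤ bₖ →
        (fmul n₁ n₂ n₃ (k * s) x : ℚ) ≤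
          ((n₁ : ℚ) * (n₂ : ℚ)) / ((t : ℚ) * ((n₂ : ℚ) - (n₁ : ℚ))) * ((bₖ : ℚ) - (x : ℚ)) + 1) :=
  multiplicity_upper_bound_general n₁ n₂ n₃ h₁ h₂ δ t hδ ht s hs k aₖ cₖ bₖ ha hb
end

section
/- Let s = δ·t·n₁n₂n₃ and, for k ≥ 1, set a_k = ks/n₃, c_k = ks/n₂, b_k = ks/n₁, and define L_k(x) = (n₂n₃/(t(n₃−n₂)))(x − a_k) + 1 for a_k ≤ x ≤ c_k and L_k(x) = (n₁n₂/(t(n₂−n₁)))(b_k − x) + 1 for c_k ≤ x ≤ b_k (the two formulas agree at x = c_k, where both equal ks/t + 1). There exists a constant C (independent of k) such that for all k ≥ 1 and all integers x with a_k ≤ x ≤ b_k and x ≡ a_k (mod δ), the number f_{ks}(x) of factorizations of ks of length x satisfies 0 ≤ L_k(x) − f_{ks}(x) ≤ C. -/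
/-!
A factorization of `N` of length `x` is determined by its third coordinate `j`. Writing
`p = n₂ - n₁`, `q = n₃ - n₁` and `M = N - x n₁`, the admissible `j` are exactly those with
`max ((M - p x) / (q - p), 0) ≤ j ≤ M / q` and `q j ≡ M (mod p)`. When `gcd p q = δ` divides `M`
the congruence cuts out a single residue class modulo `p / δ`, so `f_N(x)` counts the points of
an arithmetic progression of step `p / δ` in a real interval, and such a count lies between
`length / step - 2` and `length / step + 1`. For `N = ks` and `x ≡ a_k (mod δ)` the value
`length / step + 1` is exactly `L_k(x)`.
-/

open Finset

theorem Nat.gcd_sub_sub_eq {a b c : ℕ} (hab : a ≤ b) (hbc : b ≤ c) :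
    (b - a).gcd (c - b) = (b - a).gcd (c - a) := by
  rw [show c - b = c - a - (b - a) by omega, Nat.gcd_sub_self_right (by omega)]

theorem Nat.exists_mul_modEq_iff_modEq {p q M : ℕ} (hp : 0 < p) (hM : p.gcd q ∣ M) :
    ∃ v, ∀ j, q * j ≡ M [MOD p] ↔ j ≡ v [MOD p / p.gcd q] := by
  obtain ⟨k, hkM, hk0⟩ := Nat.chineseRemainder' (Nat.modEq_zero_iff_dvd.mpr hM)
  obtain ⟨v, rfl⟩ := Nat.modEq_zero_iff_dvd.mp hk0
  refine ⟨v, fun j => ⟨fun h => (h.trans hkM.symm).cancel_left_div_gcd hp, fun h => ?_⟩⟩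
  refine Nat.ModEq.trans (.of_dvd ?_ (h.mul_left' q)) hkM
  rw [← Nat.mul_div_assoc _ (Nat.gcd_dvd_left p q), mul_comm,
    Nat.mul_div_assoc _ (Nat.gcd_dvd_right p q)]
  exact dvd_mul_right _ _

theorem Nat.card_filter_modEq_Icc_eq_max (lo hi v : ℕ) {e : ℕ} (he : 0 < e) :
    (#{j ∈ Icc lo hi | j ≡ v [MOD e]} : ℤ) =
      max (⌈((hi : ℚ) + 1 - v) / e⌉ - ⌈((lo : ℚ) - v) / e⌉) 0 := by
  rw [← Ico_add_one_right_eq_Icc, Nat.Ico_filter_modEq_card _ _ he]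
  push_cast
  rfl

theorem Nat.card_filter_modEq_Icc_le (lo hi v : ℕ) {e : ℕ} (he : 0 < e) :
    #{j ∈ Icc lo hi | j ≡ v [MOD e]} ≤ (hi - lo) / e + 1 := by
  have hcard := Nat.card_filter_modEq_Icc_eq_max lo hi v he
  set c := #{j ∈ Icc lo hi | j ≡ v [MOD e]}
  rcases Nat.eq_zero_or_pos c with hc | hc
  · simp [hc]
  have hceil : ((c : ℤ) : ℚ) = ⌈((hi : ℚ) + 1 - v) / e⌉ - ⌈((lo : ℚ) - v) / e⌉ := by
    rw [hcard, max_eq_left (by omega)]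
    push_cast
    rfl
  have hlt : ((c : ℚ) - 1) * e < hi + 1 - lo := by
    rw [← lt_div_iff₀ (by positivity)]
    push_cast at hceil
    linarith [Int.ceil_lt_add_one (((hi : ℚ) + 1 - v) / e), Int.le_ceil (((lo : ℚ) - v) / e),
      show ((hi : ℚ) + 1 - lo) / e = ((hi : ℚ) + 1 - v) / e - ((lo : ℚ) - v) / e by ring]
  have hlt' : ((c : ℤ) - 1) * e < hi + 1 - lo := by exact_mod_cast hlt
  have hlo : lo ≤ hi := by
    have : (0 : ℤ) ≤ ((c : ℤ) - 1) * e := mul_nonneg (by omega) (by positivity)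
    omega
  rw [← Nat.sub_le_iff_le_add, Nat.le_div_iff_mul_le he]
  zify [hc, hlo]
  omega

theorem Nat.lt_add_mul_card_filter_modEq_Icc (lo hi v : ℕ) {e : ℕ} (he : 0 < e) :
    hi + 1 < lo + e * (#{j ∈ Icc lo hi | j ≡ v [MOD e]} + 1) := by
  have hcard := Nat.card_filter_modEq_Icc_eq_max lo hi v he
  set c := #{j ∈ Icc lo hi | j ≡ v [MOD e]}
  have hceil : ((⌈((hi : ℚ) + 1 - v) / e⌉ - ⌈((lo : ℚ) - v) / e⌉ : ℤ) : ℚ) ≤ c := by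
    exact_mod_cast hcard ▸ le_max_left _ _
  have hlt : ((hi : ℚ) + 1 - lo) / e < c + 1 := by
    push_cast at hceil
    linarith [Int.le_ceil (((hi : ℚ) + 1 - v) / e), Int.ceil_lt_add_one (((lo : ℚ) - v) / e),
      show ((hi : ℚ) + 1 - lo) / e = ((hi : ℚ) + 1 - v) / e - ((lo : ℚ) - v) / e by ring]
  rw [div_lt_iff₀ (by positivity)] at hlt
  exact_mod_cast (by linarith : (hi : ℚ) + 1 < lo + e * (c + 1))

theorem card_bounds_of_mem_iff_modEq {S : Finset ℕ} {α β : ℝ} {e v : ℕ} (he : 0 < e)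
    (hα : 0 ≤ α) (hαβ : α ≤ β) (hS : ∀ j : ℕ, j ∈ S ↔ α ≤ j ∧ j ≤ β ∧ j ≡ v [MOD e]) :
    (β - α) / e - 2 ≤ #S ∧ (#S : ℝ) ≤ (β - α) / e + 1 := by
  have hS' : S = {j ∈ Icc ⌈α⌉₊ ⌊β⌋₊ | j ≡ v [MOD e]} := by
    ext j
    simp [hS, Nat.ceil_le, Nat.le_floor_iff (hα.trans hαβ), and_assoc]
  have hlo : (⌈α⌉₊ : ℝ) < α + 1 := Nat.ceil_lt_add_one hα
  have hhi : β < ⌊β⌋₊ + 1 := Nat.lt_floor_add_one β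
  have heR : (1 : ℝ) ≤ e := by exact_mod_cast he
  have lower := Nat.lt_add_mul_card_filter_modEq_Icc ⌈α⌉₊ ⌊β⌋₊ v he
  have upper := Nat.card_filter_modEq_Icc_le ⌈α⌉₊ ⌊β⌋₊ v he
  rw [← hS'] at lower upper
  constructor
  · have : ((⌊β⌋₊ + 1 : ℕ) : ℝ) < (⌈α⌉₊ + e * (#S + 1) : ℕ) := by exact_mod_cast lower
    push_cast at this
    rw [sub_le_iff_le_add, div_le_iff₀ (by positivity)]
    nlinarith
  · have hwidth : ((⌊β⌋₊ - ⌈α⌉₊ : ℕ) : ℝ) ≤ β - α := by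
      rcases le_total ⌈α⌉₊ ⌊β⌋₊ with h | h
      · rw [Nat.cast_sub h]
        linarith [Nat.floor_le (hα.trans hαβ), Nat.le_ceil α]
      · simpa [Nat.sub_eq_zero_of_le h] using hαβ
    calc (#S : ℝ) ≤ ((⌊β⌋₊ - ⌈α⌉₊) / e : ℕ) + 1 := by exact_mod_cast upper
      _ ≤ ((⌊β⌋₊ - ⌈α⌉₊ : ℕ) : ℝ) / e + 1 := by gcongr; exact Nat.cast_div_le
      _ ≤ (β - α) / e + 1 := by gcongr

def thirdCoords (p q M x : ℕ) : Finset ℕ :=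
  {j ∈ range (M + 1) | q * j ≤ M ∧ M + p * j ≤ p * x + q * j ∧ q * j ≡ M [MOD p]}

theorem fmul_eq_card_thirdCoords {n₁ p q N M x : ℕ} (h₀ : 0 < n₁) (hp : 0 < p) (hq : 0 < q)
    (hM : M + x * n₁ = N) :
    fmul n₁ (n₁ + p) (n₁ + q) N x = #(thirdCoords p q M x) := by
  have hxN : x ≤ N := by nlinarith
  have factor_iff (a₁ a₂ a₃ : ℕ) :
      a₁ * n₁ + a₂ * (n₁ + p) + a₃ * (n₁ + q) = N ∧ len (a₁, a₂, a₃) = x ↔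
        p * a₂ + q * a₃ = M ∧ a₁ + a₂ + a₃ = x := by
    simp only [len]
    constructor
    · rintro ⟨h, rfl⟩; constructor <;> nlinarith
    · rintro ⟨h, rfl⟩; constructor <;> nlinarith
  rw [fmul, Zf, filter_filter, thirdCoords]
  refine card_nbij' (fun a => a.2.2) (fun j => (x - ((M - q * j) / p + j), (M - q * j) / p, j))
    ?_ ?_ ?_ ?_
  · rintro ⟨a₁, a₂, a₃⟩ ha
    simp only [coe_filter, mem_product, mem_range, Set.mem_ofPred_eq, factor_iff] at ha ⊢
    obtain ⟨-, hsum, hlen⟩ := ha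
    refine ⟨by nlinarith, by nlinarith, by nlinarith, ?_⟩
    exact (Nat.modEq_iff_dvd' (by omega)).mpr ⟨a₂, by omega⟩
  · intro j hj
    simp only [coe_filter, mem_product, mem_range, Set.mem_ofPred_eq, factor_iff] at hj ⊢
    obtain ⟨-, hqj, hlen, hmod⟩ := hj
    obtain ⟨a₂, ha₂⟩ := (Nat.modEq_iff_dvd' hqj).mp hmod
    rw [ha₂, Nat.mul_div_cancel_left _ hp]
    have hx : a₂ + j ≤ x := Nat.le_of_mul_le_mul_left (by rw [mul_add]; omega) hp
    exact ⟨⟨by omega, by nlinarith, by omega⟩, by omega, by omega⟩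
  · rintro ⟨a₁, a₂, a₃⟩ ha
    simp only [coe_filter, mem_product, mem_range, Set.mem_ofPred_eq, factor_iff] at ha ⊢
    obtain ⟨-, hsum, hlen⟩ := ha
    rw [show M - q * a₃ = p * a₂ by omega, Nat.mul_div_cancel_left _ hp]
    simp only [Prod.mk.injEq, and_true]
    omega
  · intro j _
    rfl

theorem mem_thirdCoords_iff {p q M x v : ℕ} (hp : 0 < p) (hpq : p < q)
    (hv : ∀ j, q * j ≡ M [MOD p] ↔ j ≡ v [MOD p / p.gcd q]) (j : ℕ) :
    j ∈ thirdCoords p q M x ↔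
      max (((M : ℝ) - p * x) / (q - p)) 0 ≤ j ∧ (j : ℝ) ≤ M / q ∧ j ≡ v [MOD p / p.gcd q] := by
  have hqR : (0 : ℝ) < q := by exact_mod_cast hp.trans hpq
  have hqpR : (0 : ℝ) < q - p := by rw [sub_pos]; exact_mod_cast hpq
  have hle₁ : q * j ≤ M ↔ (j : ℝ) * q ≤ M := by
    rw [← Nat.cast_le (α := ℝ), mul_comm]
    push_cast
    rfl
  have hle₂ : M + p * j ≤ p * x + q * j ↔ (M : ℝ) - p * x ≤ j * (q - p) := by
    rw [← Nat.cast_le (α := ℝ)]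
    push_cast
    constructor <;> intro h <;> linarith
  have hrange : (j : ℝ) * q ≤ M → j < M + 1 := fun h => by
    have : j * q ≤ M := by exact_mod_cast h
    nlinarith
  rw [thirdCoords, mem_filter, mem_range, hv, max_le_iff, div_le_iff₀ hqpR, le_div_iff₀ hqR,
    hle₁, hle₂]
  exact ⟨fun ⟨_, h₁, h₂, h₃⟩ => ⟨⟨h₂, j.cast_nonneg⟩, h₁, h₃⟩,
    fun ⟨⟨h₂, _⟩, h₁, h₃⟩ => ⟨hrange h₁, h₁, h₂, h₃⟩⟩

noncomputable def fmulApprox (p q M x : ℕ) : ℝ :=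
  (p.gcd q : ℝ) / p * (M / q - max (((M : ℝ) - p * x) / (q - p)) 0) + 1

theorem fmulApprox_sub_fmul_mem_Icc {n₁ n₂ n₃ N x : ℕ} (h₀ : 0 < n₁) (h₁ : n₁ < n₂)
    (h₂ : n₂ < n₃) (hxN : x * n₁ ≤ N) (hNx : N ≤ x * n₃)
    (hdvd : (n₂ - n₁).gcd (n₃ - n₁) ∣ N - x * n₁) :
    fmulApprox (n₂ - n₁) (n₃ - n₁) (N - x * n₁) x - fmul n₁ n₂ n₃ N x ∈ Set.Icc (0 : ℝ) 3 := by
  obtain ⟨p, rfl⟩ := Nat.exists_eq_add_of_le h₁.le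
  obtain ⟨q, rfl⟩ := Nat.exists_eq_add_of_le (h₁.trans h₂).le
  obtain ⟨M, hM⟩ : ∃ M, M + x * n₁ = N := ⟨N - x * n₁, by omega⟩
  rw [Nat.add_sub_cancel_left, Nat.add_sub_cancel_left, show N - x * n₁ = M by omega] at hdvd ⊢
  have hp : 0 < p := by omega
  have hpq : p < q := by omega
  have hMx : (M : ℝ) ≤ q * x := by exact_mod_cast (by nlinarith : M ≤ q * x)
  have hqR : (0 : ℝ) < q := by exact_mod_cast hp.trans hpq
  have hqpR : (0 : ℝ) < q - p := by rw [sub_pos]; exact_mod_cast hpq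
  set α : ℝ := max (((M : ℝ) - p * x) / (q - p)) 0
  set β : ℝ := M / q
  have hαβ : α ≤ β := by
    refine max_le ?_ (by positivity)
    rw [div_le_div_iff₀ hqpR hqR]
    nlinarith
  obtain ⟨v, hv⟩ := Nat.exists_mul_modEq_iff_modEq hp hdvd
  have hstep : 0 < p / p.gcd q := Nat.div_pos (Nat.gcd_le_left q hp) (Nat.gcd_pos_of_pos_left q hp)
  have hcard := card_bounds_of_mem_iff_modEq hstep (le_max_right _ _) hαβ
    (mem_thirdCoords_iff hp hpq hv)
  rw [← fmul_eq_card_thirdCoords h₀ hp (hp.trans hpq) hM,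
    Nat.cast_div (Nat.gcd_dvd_left p q) (by positivity), div_div_eq_mul_div] at hcard
  have happrox : fmulApprox p q M x = (β - α) * p.gcd q / p + 1 := by
    rw [fmulApprox]
    ring
  rw [happrox, Set.mem_Icc]
  constructor <;> linarith

theorem piecewise_linear_eq_fmulApprox {n₁ n₂ n₃ δ t a b c N x : ℕ} (h₁ : n₁ < n₂) (h₂ : n₂ < n₃)
    (hδ : δ = (n₂ - n₁).gcd (n₃ - n₁)) (ht : t = n₂ * (n₃ - n₁) / δ)
    (ha : N = a * n₃) (hc : N = c * n₂) (hb : N = b * n₁) (hxN : x * n₁ ≤ N) :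
    (if x ≤ c then (n₂ * n₃ : ℝ) / (t * (n₃ - n₂)) * (x - a) + 1
      else (n₁ * n₂ : ℝ) / (t * (n₂ - n₁)) * (b - x) + 1) =
      fmulApprox (n₂ - n₁) (n₃ - n₁) (N - x * n₁) x := by
  have hδpos : 0 < δ := hδ ▸ Nat.gcd_pos_of_pos_left _ (by omega)
  have htR : (t : ℝ) = n₂ * (n₃ - n₁) / δ := by
    rw [ht, Nat.cast_div (hδ ▸ dvd_mul_of_dvd_right (Nat.gcd_dvd_right _ _) _) (by positivity),
      Nat.cast_mul, Nat.cast_sub (by omega)]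
  have h₁R : (n₁ : ℝ) < n₂ := by exact_mod_cast h₁
  have h₂R : (n₂ : ℝ) < n₃ := by exact_mod_cast h₂
  have hn₂ : (n₂ : ℝ) ≠ 0 := by have : (0 : ℝ) ≤ n₁ := n₁.cast_nonneg; linarith
  have hδR : (δ : ℝ) ≠ 0 := by positivity
  have h₂₁ : (n₂ : ℝ) - n₁ ≠ 0 := by linarith
  have h₃₁ : (n₃ : ℝ) - n₁ ≠ 0 := by linarith
  have h₃₂ : (n₃ : ℝ) - n₂ ≠ 0 := by linarith
  have hN_a : (N : ℝ) = a * n₃ := by exact_mod_cast ha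
  have hN_b : (N : ℝ) = b * n₁ := by exact_mod_cast hb
  rw [fmulApprox, ← hδ]
  push_cast [Nat.cast_sub h₁.le, Nat.cast_sub (h₁.trans h₂).le, Nat.cast_sub hxN]
  rw [sub_sub_sub_cancel_right]
  split_ifs with hxc
  · have : (x : ℝ) * n₂ ≤ N := by rw [hc]; exact_mod_cast Nat.mul_le_mul_right n₂ hxc
    rw [max_eq_left (div_nonneg (by linarith) (by linarith)), htR, hN_a]
    field_simp
    ring
  · have : (N : ℝ) ≤ x * n₂ := by rw [hc]; exact_mod_cast Nat.mul_le_mul_right n₂ (not_le.mp hxc).le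
    rw [max_eq_right (div_nonpos_of_nonpos_of_nonneg (by linarith) (by linarith)), htR, hN_b]
    field_simp
    ring

theorem multiplicity_close_to_piecewise_linear_general (n₁ n₂ n₃ : ℕ) (h₀ : 0 < n₁) (h₁ : n₁ < n₂) (h₂ : n₂ < n₃)
    (δ t : ℕ) (hδ : δ = Nat.gcd (n₂ - n₁) (n₃ - n₂)) (ht : t = n₂ * (n₃ - n₁) / δ)
    (s : ℕ) (hs : s = δ * t * n₁ * n₂ * n₃)
    (a c b : ℕ → ℕ) (ha : ∀ k, a k = k * δ * t * n₁ * n₂)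
    (hc : ∀ k, c k = k * δ * t * n₁ * n₃) (hb : ∀ k, b k = k * δ * t * n₂ * n₃) :
    ∃ C : ℝ, ∀ k : ℕ, 1 ≤ k → ∀ x : ℕ, a k ≤ x → x ≤ b k → x ≡ a k [MOD δ] →
      0 ≤ (if x ≤ c k then
              ((n₂ : ℝ) * (n₃ : ℝ)) / ((t : ℝ) * ((n₃ : ℝ) - (n₂ : ℝ))) * ((x : ℝ) - (a k : ℝ)) + 1
            else
              ((n₁ : ℝ) * (n₂ : ℝ)) / ((t : ℝ) * ((n₂ : ℝ) - (n₁ : ℝ))) * ((b k : ℝ) - (x : ℝ)) + 1)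
            - (fmul n₁ n₂ n₃ (k * s) x : ℝ) ∧
      (if x ≤ c k then
          ((n₂ : ℝ) * (n₃ : ℝ)) / ((t : ℝ) * ((n₃ : ℝ) - (n₂ : ℝ))) * ((x : ℝ) - (a k : ℝ)) + 1
        else
          ((n₁ : ℝ) * (n₂ : ℝ)) / ((t : ℝ) * ((n₂ : ℝ) - (n₁ : ℝ))) * ((b k : ℝ) - (x : ℝ)) + 1)
        - (fmul n₁ n₂ n₃ (k * s) x : ℝ) ≤ C := by
  refine ⟨3, fun k _ x hax hxb hmod => ?_⟩
  rw [Nat.gcd_sub_sub_eq h₁.le h₂.le] at hδ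
  have hN_a : k * s = a k * n₃ := by rw [hs, ha]; ring
  have hN_c : k * s = c k * n₂ := by rw [hs, hc]; ring
  have hN_b : k * s = b k * n₁ := by rw [hs, hb]; ring
  have hxN : x * n₁ ≤ k * s := hN_b ▸ Nat.mul_le_mul_right n₁ hxb
  have hNx : k * s ≤ x * n₃ := hN_a ▸ Nat.mul_le_mul_right n₃ hax
  have hdvd : δ ∣ k * s - x * n₁ := by
    have hn : n₁ ≡ n₃ [MOD δ] :=
      (Nat.modEq_iff_dvd' (h₁.trans h₂).le).mpr (hδ ▸ Nat.gcd_dvd_right _ _)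
    exact (Nat.modEq_iff_dvd' hxN).mp (hN_a ▸ hmod.mul hn)
  rw [piecewise_linear_eq_fmulApprox h₁ h₂ hδ ht hN_a hN_c hN_b hxN]
  exact fmulApprox_sub_fmul_mem_Icc h₀ h₁ h₂ hxN hNx (hδ ▸ hdvd)

/-- The piecewise linear function L_k dominates the multiplicity function of ks on
[aₖ, bₖ] (on lengths congruent to aₖ mod δ), and the difference is bounded by a constant
independent of k. -/
theorem multiplicity_close_to_piecewise_linear (n₁ n₂ n₃ : ℕ) (h₀ : 0 < n₁) (h₁ : n₁ < n₂) (h₂ : n₂ < n₃)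
    (hg : Nat.gcd n₁ (Nat.gcd n₂ n₃) = 1)
    (δ t : ℕ) (hδ : δ = Nat.gcd (n₂ - n₁) (n₃ - n₂)) (ht : t = n₂ * (n₃ - n₁) / δ)
    (s : ℕ) (hs : s = δ * t * n₁ * n₂ * n₃)
    (a c b : ℕ → ℕ) (ha : ∀ k, a k = k * δ * t * n₁ * n₂)
    (hc : ∀ k, c k = k * δ * t * n₁ * n₃) (hb : ∀ k, b k = k * δ * t * n₂ * n₃) :
    ∃ C : ℝ, ∀ k : ℕ, 1 ≤ k → ∀ x : ℕ, a k ≤ x → x ≤ b k → x ≡ a k [MOD δ] →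
      0 ≤ (if x ≤ c k then
              ((n₂ : ℝ) * (n₃ : ℝ)) / ((t : ℝ) * ((n₃ : ℝ) - (n₂ : ℝ))) * ((x : ℝ) - (a k : ℝ)) + 1
            else
              ((n₁ : ℝ) * (n₂ : ℝ)) / ((t : ℝ) * ((n₂ : ℝ) - (n₁ : ℝ))) * ((b k : ℝ) - (x : ℝ)) + 1)
            - (fmul n₁ n₂ n₃ (k * s) x : ℝ) ∧
      (if x ≤ c k then
          ((n₂ : ℝ) * (n₃ : ℝ)) / ((t : ℝ) * ((n₃ : ℝ) - (n₂ : ℝ))) * ((x : ℝ) - (a k : ℝ)) + 1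
        else
          ((n₁ : ℝ) * (n₂ : ℝ)) / ((t : ℝ) * ((n₂ : ℝ) - (n₁ : ℝ))) * ((b k : ℝ) - (x : ℝ)) + 1)
        - (fmul n₁ n₂ n₃ (k * s) x : ℝ) ≤ C :=
  multiplicity_close_to_piecewise_linear_general n₁ n₂ n₃ h₀ h₁ h₂ δ t hδ ht s hs a c b ha hc hb
end

section
/- Let (a,b,c) be a primitive Pythagorean triple with a² + b² = c², gcd(a,b) = 1, and b < a. Set n₁ = a² − b², n₂ = a², n₃ = a² + b² = c². Then 0 < n₁ < n₂ < n₃, gcd(n₁,n₂,n₃) = 1, the fulcrum constant satisfies F = (a² − b²)/(2a²) < 1/2, and the median factorization length of S = ⟨n₁,n₂,n₃⟩ satisfies η(n)/n → (1/(a²−b²))·(1 − c/(2a)) + (1/(a²+b²))·(c/(2a)) as n → ∞ over S; in particular this limit is a rational number. -/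
/-!
Write `n₂ = n₁ + d`, `n₃ = n₁ + 2d`. A factorization `(x, y, w)` of `n` with `w ≤ x` is the same
as a factorization `(w, y, x - w)` of `n` in `⟨2n₂, n₂, n₁⟩`; with `m = 2w + y` its length `ℓ`
satisfies `ℓ n₁ = n - m d`. For each `m` there are `⌊m/2⌋ + 1` pairs `(w, y)`, and since
`gcd(n₁, n₂) = 1` the admissible `m` form an arithmetic progression of difference `n₁`. Summing,
the number of factorizations of length `> τ n` is `(1 - τ n₁)² n² / (4 n₁ d²) + O(n)` for
`1/n₂ ≤ τ ≤ 1/n₁`, and the same count with `x` and `w` exchanged gives `n² / (2 n₁ n₂ n₃) + O(n)`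
factorizations in all. Hence the median length is `κ n + o(n)`, where the count beyond `κ n` is
half the total: `(1 - κ n₁)² = d² / (n₂ n₃)`, i.e. `κ = (1 - d / √(n₂ n₃)) / n₁`. For a
Pythagorean triple `√(n₂ n₃) = a c` is an integer.
-/

open Finset Filter Asymptotics Topology

lemma sum_range_add_mul_div_two (a g K : ℕ) :
    ∑ i ∈ range K, ((a + i * g : ℕ) : ℝ) / 2 = K * a / 2 + g * K * (K - 1) / 4 := by
  induction K with
  | zero => simp
  | succ K ih => rw [sum_range_succ, ih]; push_cast; ring

lemma abs_sq_sub_sq_le {V W c X : ℝ} (hV : 0 ≤ V) (hW : 0 ≤ W) (hVW : |V - W| ≤ c)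
    (hWX : W ≤ X) : |V ^ 2 - W ^ 2| ≤ c * (2 * X + c) := by
  rw [sq_sub_sq, abs_mul, abs_of_nonneg (add_nonneg hV hW), mul_comm]
  have : V + W ≤ 2 * X + c := by linarith [le_abs_self (V - W)]
  exact mul_le_mul hVW this (by positivity) ((abs_nonneg _).trans hVW)

lemma abs_sum_div_two_add_one_sub_sq_le {a g K : ℕ} {V : ℝ} (ha : a < g) (hV : 0 ≤ V)
    (hlo : a + (K - 1) * g ≤ V) (hhi : V ≤ a + (K + 1) * g) :
    |∑ i ∈ range K, (((a + i * g) / 2 + 1 : ℕ) : ℝ) - V ^ 2 / (4 * g)| ≤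
      ((g : ℝ) + 1) * (K + 1) := by
  have hg : (0 : ℝ) < g := by exact_mod_cast (Nat.zero_lt_of_lt ha)
  have ha' : (a : ℝ) + 1 ≤ g := by exact_mod_cast ha
  have hlo_sum : ∑ i ∈ range K, (((a + i * g : ℕ) : ℝ) / 2 + 1 / 2) ≤
      ∑ i ∈ range K, (((a + i * g) / 2 + 1 : ℕ) : ℝ) := by
    refine sum_le_sum fun i _ => ?_
    have : a + i * g ≤ 2 * ((a + i * g) / 2) + 1 := by omega
    have : ((a + i * g : ℕ) : ℝ) ≤ 2 * ((a + i * g) / 2 : ℕ) + 1 := by exact_mod_cast this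
    push_cast at this ⊢; linarith
  have hhi_sum : ∑ i ∈ range K, (((a + i * g) / 2 + 1 : ℕ) : ℝ) ≤
      ∑ i ∈ range K, (((a + i * g : ℕ) : ℝ) / 2 + 1) := by
    refine sum_le_sum fun i _ => ?_
    have := Nat.cast_div_le (α := ℝ) (m := a + i * g) (n := 2)
    push_cast at this ⊢; linarith
  rw [sum_add_distrib, sum_const, card_range, sum_range_add_mul_div_two] at hlo_sum hhi_sum
  simp only [nsmul_eq_mul] at hlo_sum hhi_sum
  set S := ∑ i ∈ range K, (((a + i * g) / 2 + 1 : ℕ) : ℝ)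
  have hK : (0 : ℝ) ≤ K := K.cast_nonneg
  have ha0 : (0 : ℝ) ≤ a := a.cast_nonneg
  set A : ℝ := a + K * g
  have hsq : |V ^ 2 - A ^ 2| ≤ g * (2 * A + g) :=
    abs_sq_sub_sq_le hV (by positivity) (abs_le.2 ⟨by linarith, by linarith⟩) le_rfl
  rw [abs_le] at hsq
  have h4g : (0 : ℝ) ≤ 4 * g := by positivity
  have hlo4 := mul_le_mul_of_nonneg_left hlo_sum h4g
  have hhi4 := mul_le_mul_of_nonneg_left hhi_sum h4g
  have haa : (a : ℝ) * a ≤ g * g := by nlinarith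
  have hag : (a : ℝ) * g ≤ g * g := by nlinarith
  have key : |4 * g * S - V ^ 2| ≤ 4 * g * (((g : ℝ) + 1) * (K + 1)) := by
    rw [abs_le]; constructor <;> nlinarith
  rw [show S - V ^ 2 / (4 * g) = (4 * g * S - V ^ 2) / (4 * g) by field_simp,
    abs_div, abs_of_pos (by positivity : (0 : ℝ) < 4 * g), div_le_iff₀ (by positivity)]
  linarith

lemma mem_Zf {g₁ g₂ g₃ n : ℕ} (h₁ : 0 < g₁) (h₂ : 0 < g₂) (h₃ : 0 < g₃) {z : ℕ × ℕ × ℕ} :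
    z ∈ Zf g₁ g₂ g₃ n ↔ z.1 * g₁ + z.2.1 * g₂ + z.2.2 * g₃ = n := by
  obtain ⟨x, y, w⟩ := z
  simp only [Zf, mem_filter, mem_product, mem_range, and_iff_right_iff_imp]
  intro h
  refine ⟨?_, ?_, ?_⟩ <;> nlinarith

lemma card_filter_two_mul_add_eq {g h N m : ℕ} (hg : 0 < g) (hh : 0 < h) (hm : m * h ≤ N)
    (hdvd : g ∣ N - m * h) :
    #{t ∈ Zf (2 * h) h g N | 2 * t.1 + t.2.1 = m} = m / 2 + 1 := by
  obtain ⟨u, hu⟩ := hdvd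
  have hN := Nat.eq_add_of_sub_eq hm hu
  have hmem : ∀ z, z ∈ Zf (2 * h) h g N ↔ _ := fun z => mem_Zf (by omega) hh hg (z := z)
  rw [← card_range (m / 2 + 1)]
  refine card_nbij' (fun t => t.1) (fun i => (i, m - 2 * i, u)) ?_ ?_ ?_ ?_
  · rintro ⟨w, y, v⟩ ht
    simp only [coe_filter, Set.mem_ofPred_eq, hmem] at ht
    simp only [coe_range, Set.mem_Iio]
    omega
  · intro i hi
    simp only [coe_range, Set.mem_Iio] at hi
    simp only [coe_filter, Set.mem_ofPred_eq, hmem]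
    obtain ⟨r, rfl⟩ : ∃ r, m = 2 * i + r := ⟨m - 2 * i, by omega⟩
    refine ⟨?_, by omega⟩
    rw [hN, Nat.add_sub_cancel_left]
    ring
  · rintro ⟨w, y, v⟩ ht
    simp only [coe_filter, Set.mem_ofPred_eq, hmem] at ht
    obtain ⟨ht, rfl⟩ := ht
    have : v * g = u * g := by linarith
    simp [Nat.eq_of_mul_eq_mul_right hg this]
  · intro i _
    rfl

lemma dvd_sub_mul_iff_mod_eq {g h N a m : ℕ} (hgh : Nat.Coprime g h) (ha : a < g)
    (haN : a * h ≡ N [MOD g]) (hm : m * h ≤ N) : g ∣ N - m * h ↔ m % g = a := by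
  rw [← Nat.modEq_iff_dvd' hm, ← Nat.mod_eq_of_lt ha]
  exact ⟨fun hmN => Nat.ModEq.cancel_right_of_coprime hgh (hmN.trans haN.symm),
    fun hma => (Nat.ModEq.mul_right h hma).trans haN⟩

lemma card_filter_lt_eq_sum_range {g h N a K : ℕ} (hg : 0 < g) (hh : 0 < h)
    (hgh : Nat.Coprime g h) (ha : a < g) (haN : a * h ≡ N [MOD g]) {V : ℝ}
    (hK : ∀ i, i < K ↔ (a + i * g) * h ≤ N ∧ ((a + i * g : ℕ) : ℝ) < V) :
    #{t ∈ Zf (2 * h) h g N | ((2 * t.1 + t.2.1 : ℕ) : ℝ) < V} =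
      ∑ i ∈ range K, ((a + i * g) / 2 + 1) := by
  have hdecomp : ∀ t ∈ Zf (2 * h) h g N,
      (2 * t.1 + t.2.1) * h ≤ N ∧ 2 * t.1 + t.2.1 = a + (2 * t.1 + t.2.1) / g * g := by
    rintro ⟨w, y, v⟩ ht
    rw [mem_Zf (by omega) hh hg] at ht
    have hle : (2 * w + y) * h ≤ N := by rw [← ht]; ring_nf; omega
    have hmod := (dvd_sub_mul_iff_mod_eq hgh ha haN hle).1 ⟨v, by rw [← ht]; ring_nf; omega⟩
    exact ⟨hle, by rw [← hmod]; exact (Nat.mod_add_div' _ g).symm⟩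
  rw [card_eq_sum_card_fiberwise (f := fun t => (2 * t.1 + t.2.1) / g) (t := range K)]
  · refine sum_congr rfl fun i hi => ?_
    have hi := (hK i).1 (mem_range.1 hi)
    rw [filter_filter, ← card_filter_two_mul_add_eq hg hh hi.1
      ((dvd_sub_mul_iff_mod_eq hgh ha haN hi.1).2 (by simp [Nat.mod_eq_of_lt ha]))]
    refine congrArg card (filter_congr fun t ht => ⟨fun ⟨_, hq⟩ => ?_, fun hq => ?_⟩)
    · rw [(hdecomp t ht).2, hq]
    · rw [hq, Nat.add_mul_div_right _ _ hg, Nat.div_eq_of_lt ha, zero_add]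
      exact ⟨hi.2, rfl⟩
  · intro t ht
    simp only [coe_filter, Set.mem_ofPred_eq] at ht
    obtain ⟨hle, hm⟩ := hdecomp t ht.1
    rw [coe_range, Set.mem_Iio, hK, ← hm]
    exact ⟨hle, ht.2⟩

lemma exists_lt_iff_of_antitone {P : ℕ → Prop} (hP : Antitone P) {n : ℕ}
    (hn : ¬ P n) : ∃ K ≤ n, ∀ i, i < K ↔ P i := by
  classical
  have hex : ∃ i, ¬ P i := ⟨n, hn⟩
  refine ⟨Nat.find hex, Nat.find_min' hex hn, fun i => ⟨fun hi => ?_, fun hi => ?_⟩⟩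
  · exact not_not.1 (Nat.find_min hex hi)
  · exact lt_of_not_ge fun hKi => Nat.find_spec hex (hP hKi hi)

theorem abs_card_filter_lt_sub_sq_le {g h N : ℕ} (hg : 0 < g) (hh : 0 < h)
    (hgh : Nat.Coprime g h) {V : ℝ} (hV : 0 ≤ V) (hVN : V * h ≤ N + g * h) :
    |(#{t ∈ Zf (2 * h) h g N | ((2 * t.1 + t.2.1 : ℕ) : ℝ) < V} : ℝ) - V ^ 2 / (4 * g)| ≤
      ((g : ℝ) + 1) * (N + 2) := by
  obtain ⟨a, ha, hamod⟩ := Nat.exists_mul_mod_eq_of_coprime N hgh.symm hg.ne'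
  have haN : a * h ≡ N [MOD g] := by rw [mul_comm]; exact hamod
  -- `K` counts the `i` for which `a + i g` is an admissible value of `2 t.1 + t.2.1` below `V`
  obtain ⟨K, hKN, hK⟩ := exists_lt_iff_of_antitone
    (P := fun i => (a + i * g) * h ≤ N ∧ ((a + i * g : ℕ) : ℝ) < V)
    (fun i j hij hj => ⟨le_trans (by gcongr) hj.1, lt_of_le_of_lt (by gcongr) hj.2⟩)
    (n := N + 1) fun hN => by
      have : N + 1 ≤ (a + (N + 1) * g) * h :=
        le_trans (Nat.le_mul_of_pos_right _ hg) (le_trans (Nat.le_add_left _ _)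
          (Nat.le_mul_of_pos_right _ hh))
      omega
  have hlo : a + ((K : ℝ) - 1) * g ≤ V := by
    rcases Nat.eq_zero_or_pos K with hK0 | hK0
    · rw [hK0, Nat.cast_zero]
      have : (a : ℝ) + 1 ≤ g := by exact_mod_cast ha
      linarith
    · have := ((hK (K - 1)).1 (by omega)).2
      push_cast [Nat.cast_sub hK0] at this
      linarith
  have hhi : V ≤ a + ((K : ℝ) + 1) * g := by
    have hKP := mt (hK K).2 (lt_irrefl K)
    by_cases hKh : (a + K * g) * h ≤ N
    · have := not_lt.1 fun h' => hKP ⟨hKh, h'⟩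
      push_cast at this
      nlinarith [(Nat.cast_nonneg g : (0 : ℝ) ≤ g)]
    · have : ((N : ℕ) : ℝ) + 1 ≤ ((a + K * g) * h : ℕ) := by exact_mod_cast not_le.1 hKh
      push_cast at this
      have hh' : (0 : ℝ) < h := by exact_mod_cast hh
      nlinarith
  rw [card_filter_lt_eq_sum_range hg hh hgh ha haN hK, Nat.cast_sum]
  calc _ ≤ ((g : ℝ) + 1) * (K + 1) := abs_sum_div_two_add_one_sub_sq_le ha hV hlo hhi
    _ ≤ ((g : ℝ) + 1) * (N + 2) :=
      mul_le_mul_of_nonneg_left (by exact_mod_cast (by omega : K + 1 ≤ N + 2)) (by positivity)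

lemma card_filter_Zf_swap (g₁ g₂ g₃ n : ℕ) (P : ℕ × ℕ × ℕ → Prop) [DecidablePred P] :
    #{z ∈ Zf g₁ g₂ g₃ n | P z} = #{z ∈ Zf g₃ g₂ g₁ n | P (z.2.2, z.2.1, z.1)} := by
  refine card_nbij' (fun z => (z.2.2, z.2.1, z.1)) (fun z => (z.2.2, z.2.1, z.1)) ?_ ?_
    (fun _ _ => rfl) (fun _ _ => rfl) <;>
  · rintro ⟨x, y, w⟩
    simp only [Zf, coe_filter, mem_filter, mem_product, mem_range, Set.mem_ofPred_eq]
    rintro ⟨⟨⟨hx, hy, hw⟩, h⟩, hP⟩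
    exact ⟨⟨⟨hw, hy, hx⟩, by rw [← h]; ring⟩, hP⟩

lemma card_filter_snd_le_fst {g₁ g₂ g₃ n : ℕ} (h₁ : 0 < g₁) (h₂ : 0 < g₂) (h₃ : 0 < g₃)
    (hg : g₁ + g₃ = 2 * g₂) (P : ℕ × ℕ × ℕ → Prop) [DecidablePred P] :
    #{z ∈ Zf g₁ g₂ g₃ n | z.2.2 ≤ z.1 ∧ P z} =
      #{t ∈ Zf (2 * g₂) g₂ g₁ n | P (t.1 + t.2.2, t.2.1, t.1)} := by
  have hmem := fun z => mem_Zf h₁ h₂ h₃ (n := n) (z := z)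
  have hmem' := fun z => mem_Zf (g₁ := 2 * g₂) (by omega) h₂ h₁ (n := n) (z := z)
  refine card_nbij' (fun z => (z.2.2, z.2.1, z.1 - z.2.2)) (fun t => (t.1 + t.2.2, t.2.1, t.1))
    ?_ ?_ ?_ ?_
  · rintro ⟨x, y, w⟩ hz
    simp only [coe_filter, Set.mem_ofPred_eq, hmem, hmem'] at hz ⊢
    obtain ⟨hz, hwx, hP⟩ := hz
    obtain ⟨u, rfl⟩ := Nat.exists_eq_add_of_le hwx
    rw [Nat.add_sub_cancel_left]
    refine ⟨?_, hP⟩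
    rw [← hz, ← hg]
    ring
  · rintro ⟨w, y, u⟩ ht
    simp only [coe_filter, Set.mem_ofPred_eq, hmem, hmem', Nat.le_add_right, true_and] at ht ⊢
    refine ⟨?_, ht.2⟩
    rw [← ht.1]
    zify at hg ⊢
    linear_combination (w : ℤ) * hg
  · rintro ⟨x, y, w⟩ hz
    simp only [coe_filter, Set.mem_ofPred_eq] at hz
    simp [Nat.add_sub_cancel' hz.2.1]
  · rintro ⟨w, y, u⟩ -
    simp

lemma card_filter_fst_eq_snd_le {g₁ g₂ g₃ n : ℕ} (h₂ : 0 < g₂) :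
    #{z ∈ Zf g₁ g₂ g₃ n | z.1 = z.2.2} ≤ n + 1 := by
  rw [← card_range (n + 1)]
  refine card_le_card_of_injOn (fun z => z.1) ?_ ?_
  · rintro ⟨x, y, w⟩ hz
    simp only [Zf, coe_filter, mem_filter, mem_product, mem_range, Set.mem_ofPred_eq] at hz
    simp only [coe_range, Set.mem_Iio]
    exact hz.1.1.1
  · rintro ⟨x, y, w⟩ hz ⟨x', y', w'⟩ hz' (rfl : x = x')
    simp only [Zf, coe_filter, mem_filter, Set.mem_ofPred_eq] at hz hz'
    obtain ⟨⟨-, hz⟩, rfl⟩ := hz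
    obtain ⟨⟨-, hz'⟩, rfl⟩ := hz'
    have : y * g₂ = y' * g₂ := by linarith
    simp [Nat.eq_of_mul_eq_mul_right h₂ this]

lemma card_Zf_add_card_filter_fst_eq_snd {g₁ g₂ g₃ n : ℕ} (h₁ : 0 < g₁) (h₂ : 0 < g₂)
    (h₃ : 0 < g₃) (hg : g₁ + g₃ = 2 * g₂) :
    #(Zf g₁ g₂ g₃ n) + #{z ∈ Zf g₁ g₂ g₃ n | z.1 = z.2.2} =
      #(Zf (2 * g₂) g₂ g₁ n) + #(Zf (2 * g₂) g₂ g₃ n) := by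
  have hA := card_filter_snd_le_fst h₁ h₂ h₃ hg (n := n) (fun _ => True)
  have hB := card_filter_snd_le_fst h₃ h₂ h₁ (by omega) (n := n) (fun _ => True)
  simp only [and_true, filter_true] at hA hB
  rw [← card_filter_Zf_swap g₁ g₂ g₃ n (fun z => z.1 ≤ z.2.2)] at hB
  rw [← hA, ← hB, ← card_union_add_card_inter {z ∈ Zf g₁ g₂ g₃ n | z.2.2 ≤ z.1},
     ← filter_or, ← filter_and]
  congr 2
  · exact (filter_true_of_mem fun z _ => le_total _ _).symm
  · exact filter_congr fun z _ => ⟨fun h => ⟨h ▸ le_rfl, h ▸ le_rfl⟩,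
      fun h => le_antisymm h.2 h.1⟩

lemma isBigO_natCast_of_abs_le {f : ℕ → ℝ} (C : ℝ) (h : ∀ n, |f n| ≤ C * (n + 1)) :
    f =O[atTop] (fun n => (n : ℝ)) := by
  refine IsBigO.of_bound (2 * |C|) ?_
  filter_upwards [eventually_ge_atTop 1] with n hn
  have hn' : (1 : ℝ) ≤ n := by exact_mod_cast hn
  rw [Real.norm_eq_abs, Real.norm_natCast]
  nlinarith [h n, le_abs_self C, abs_nonneg C]

theorem isBigO_card_Zf_two_mul {g h : ℕ} (hg : 0 < g) (hh : 0 < h) (hgh : Nat.Coprime g h) :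
    (fun N : ℕ => (#(Zf (2 * h) h g N) : ℝ) - N ^ 2 / (4 * g * h ^ 2)) =O[atTop]
      (fun N => (N : ℝ)) := by
  refine isBigO_natCast_of_abs_le (2 * g + 3) fun N => ?_
  have hg' : (1 : ℝ) ≤ g := by exact_mod_cast hg
  have hh' : (1 : ℝ) ≤ h := by exact_mod_cast hh
  set V : ℝ := N / h + 1
  have hcore := abs_card_filter_lt_sub_sq_le hg hh hgh (V := V) (N := N) (by positivity)
    (by rw [add_mul, div_mul_cancel₀ _ (by positivity)]; nlinarith)
  have hall : {t ∈ Zf (2 * h) h g N | ((2 * t.1 + t.2.1 : ℕ) : ℝ) < V} = Zf (2 * h) h g N := by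
    refine filter_true_of_mem fun t ht => ?_
    rw [mem_Zf (by omega) hh hg] at ht
    have : ((2 * t.1 + t.2.1 : ℕ) : ℝ) * h ≤ N := by
      rw [← ht]; push_cast; nlinarith [(t.2.2.cast_nonneg : (0 : ℝ) ≤ t.2.2)]
    rw [← le_div_iff₀ (by positivity)] at this
    linarith
  rw [hall] at hcore
  have hV : |V ^ 2 / (4 * g) - N ^ 2 / (4 * g * h ^ 2)| ≤ (N : ℝ) + 1 := by
    rw [show V ^ 2 / (4 * g) - N ^ 2 / (4 * g * h ^ 2) = (2 * (N / h) + 1) / (4 * g) by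
      simp only [V]; field_simp; ring, abs_of_nonneg (by positivity), div_le_iff₀ (by positivity)]
    have : (N : ℝ) / h ≤ N := div_le_self N.cast_nonneg hh'
    nlinarith
  calc _ ≤ |(#(Zf (2 * h) h g N) : ℝ) - V ^ 2 / (4 * g)| +
        |V ^ 2 / (4 * g) - N ^ 2 / (4 * g * h ^ 2)| := abs_sub_le _ _ _
    _ ≤ ((g : ℝ) + 1) * (N + 2) + (N + 1) := add_le_add hcore hV
    _ ≤ _ := by nlinarith

lemma eventually_lt_of_isBigO_sub {f g : ℕ → ℝ} {α β : ℝ}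
    (hf : (fun n => f n - α * n ^ 2) =O[atTop] (fun n => (n : ℝ)))
    (hg : (fun n => g n - β * n ^ 2) =O[atTop] (fun n => (n : ℝ))) (hαβ : α < β) :
    ∀ᶠ n in atTop, f n < g n := by
  have hlo : (fun n : ℕ => (n : ℝ)) =o[atTop] (fun n => (n : ℝ) ^ 2) := by
    simpa only [Function.comp_def, pow_one] using
      (isLittleO_pow_pow_atTop_of_lt (𝕜 := ℝ) one_lt_two).comp_tendsto tendsto_natCast_atTop_atTop
  filter_upwards [((hf.sub hg).trans_isLittleO hlo).bound (c := (β - α) / 2) (by linarith),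
    eventually_ge_atTop 1] with n hn hn1
  have hn1' : (1 : ℝ) ≤ n := by exact_mod_cast hn1
  rw [Real.norm_eq_abs, Real.norm_eq_abs, abs_of_nonneg (sq_nonneg (n : ℝ))] at hn
  nlinarith [le_abs_self (f n - α * n ^ 2 - (g n - β * n ^ 2)),
    mul_le_mul_of_nonneg_left (one_le_pow₀ hn1' : (1 : ℝ) ≤ n ^ 2) (by linarith : 0 ≤ β - α)]

lemma getElem_le_iff_lt_countP {α : Type*} [LinearOrder α] {l : List α}
    (hl : l.Pairwise (· ≤ ·)) {i : ℕ} (hi : i < l.length) (b : α) :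
    l[i] ≤ b ↔ i < l.countP (· ≤ b) := by
  constructor
  · intro hib
    have htake : ∀ x ∈ l.take (i + 1), x ≤ b := by
      intro x hx
      obtain ⟨j, hj, rfl⟩ := List.mem_iff_getElem.1 hx
      rw [List.getElem_take]
      rw [List.length_take] at hj
      rcases lt_or_eq_of_le (Nat.le_of_lt_succ (lt_of_lt_of_le hj (min_le_left _ _))) with hji | rfl
      · exact le_trans (List.pairwise_iff_getElem.1 hl j i _ hi hji) hib
      · exact hib
    calc i < (l.take (i + 1)).length := by rw [List.length_take]; omega
      _ = (l.take (i + 1)).countP (· ≤ b) :=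
        (List.countP_eq_length.2 fun x hx => by simpa using htake x hx).symm
      _ ≤ l.countP (· ≤ b) := (List.take_sublist _ _).countP_le
  · intro hic
    by_contra! hbi
    have hdrop : (l.drop i).countP (· ≤ b) = 0 := by
      refine List.countP_eq_zero.2 fun x hx => ?_
      obtain ⟨j, hj, rfl⟩ := List.mem_iff_getElem.1 hx
      rw [List.getElem_drop]
      rcases Nat.eq_zero_or_pos j with rfl | hj0
      · simpa using hbi
      · simpa using lt_of_lt_of_le hbi (List.pairwise_iff_getElem.1 hl i (i + j) hi _ (by omega))
    have := List.countP_append (p := (· ≤ b)) (l₁ := l.take i) (l₂ := l.drop i)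
    rw [List.take_append_drop, hdrop] at this
    have := (l.take i).countP_le_length (p := (· ≤ b))
    rw [List.length_take] at this
    omega

section Median

variable {n₁ n₂ n₃ n : ℕ}

lemma sortedLengths_pairwise : (sortedLengths n₁ n₂ n₃ n).Pairwise (· ≤ ·) :=
  Multiset.pairwise_sort _ _

lemma length_sortedLengths : (sortedLengths n₁ n₂ n₃ n).length = #(Zf n₁ n₂ n₃ n) := by
  rw [sortedLengths, Multiset.length_sort, Multiset.card_map]
  rfl

lemma countP_sortedLengths (L : ℕ) :
    (sortedLengths n₁ n₂ n₃ n).countP (· ≤ L) = #{z ∈ Zf n₁ n₂ n₃ n | len z ≤ L} := by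
  rw [← Multiset.coe_countP, sortedLengths, Multiset.sort_eq, Multiset.countP_map]
  rfl

lemma getD_sortedLengths_le_iff {i : ℕ} (hi : i < #(Zf n₁ n₂ n₃ n)) (L : ℕ) :
    (sortedLengths n₁ n₂ n₃ n).getD i 0 ≤ L ↔ i + #{z ∈ Zf n₁ n₂ n₃ n | L < len z} <
      #(Zf n₁ n₂ n₃ n) := by
  rw [← length_sortedLengths] at hi
  rw [List.getD_eq_getElem _ _ hi, getElem_le_iff_lt_countP sortedLengths_pairwise hi,
    countP_sortedLengths,
    ← card_filter_add_card_filter_not (s := Zf n₁ n₂ n₃ n) (fun z => len z ≤ L)]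
  simp only [not_le]
  omega

lemma lt_medianLen_of_card_lt {L : ℕ}
    (h : #(Zf n₁ n₂ n₃ n) < 2 * #{z ∈ Zf n₁ n₂ n₃ n | L < len z}) :
    (L : ℚ) < medianLen n₁ n₂ n₃ n := by
  have hT := card_le_card (filter_subset (fun z => L < len z) (Zf n₁ n₂ n₃ n))
  have hlt : ∀ i, #(Zf n₁ n₂ n₃ n) ≤ i + #{z ∈ Zf n₁ n₂ n₃ n | L < len z} →
      i < #(Zf n₁ n₂ n₃ n) → (L : ℚ) < (sortedLengths n₁ n₂ n₃ n).getD i 0 := fun i h1 h2 => by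
    exact_mod_cast not_le.1 fun h' => absurd ((getD_sortedLengths_le_iff h2 L).1 h') (by omega)
  simp only [medianLen, length_sortedLengths]
  split_ifs with hodd
  · exact hlt _ (by omega) (by omega)
  · have := hlt (#(Zf n₁ n₂ n₃ n) / 2 - 1) (by omega) (by omega)
    have := hlt (#(Zf n₁ n₂ n₃ n) / 2) (by omega) (by omega)
    linarith

lemma medianLen_le_of_card_le {L : ℕ}
    (h : 2 * #{z ∈ Zf n₁ n₂ n₃ n | L < len z} + 2 ≤ #(Zf n₁ n₂ n₃ n)) :
    medianLen n₁ n₂ n₃ n ≤ L := by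
  have hle : ∀ i, i + #{z ∈ Zf n₁ n₂ n₃ n | L < len z} < #(Zf n₁ n₂ n₃ n) →
      ((sortedLengths n₁ n₂ n₃ n).getD i 0 : ℚ) ≤ L := fun i hi => by
    exact_mod_cast (getD_sortedLengths_le_iff (by omega) L).2 hi
  simp only [medianLen, length_sortedLengths]
  split_ifs with hodd
  · exact hle _ (by omega)
  · have := hle (#(Zf n₁ n₂ n₃ n) / 2 - 1) (by omega)
    have := hle (#(Zf n₁ n₂ n₃ n) / 2) (by omega)
    linarith

end Median

section ArithmeticSequence

variable {n₁ n₂ n₃ d : ℕ}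

lemma card_filter_lt_len {n L : ℕ} (hn₁ : 0 < n₁) (hd : 0 < d) (h₂ : n₂ = n₁ + d)
    (h₃ : n₃ = n₂ + d) (hL : n ≤ (L + 1) * n₂) :
    #{z ∈ Zf n₁ n₂ n₃ n | L < len z} =
      #{t ∈ Zf (2 * n₂) n₂ n₁ n | ((2 * t.1 + t.2.1 : ℕ) : ℝ) < (n - L * n₁) / d} := by
  have hn₂ : 0 < n₂ := by omega
  have hmem := fun z => mem_Zf hn₁ hn₂ (by omega : 0 < n₃) (n := n) (z := z)
  have hmem' := fun z => mem_Zf (g₁ := 2 * n₂) (by omega) hn₂ hn₁ (n := n) (z := z)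
  -- a factorization of length `> L` uses the largest generator at most as often as the smallest
  have hlong : {z ∈ Zf n₁ n₂ n₃ n | L < len z} =
      {z ∈ Zf n₁ n₂ n₃ n | z.2.2 ≤ z.1 ∧ L < len z} := by
    refine filter_congr fun ⟨x, y, w⟩ hz => ⟨fun hL' => ⟨?_, hL'⟩, And.right⟩
    rw [hmem] at hz
    simp only [len] at hL' ⊢
    by_contra! hxw
    have : (L + 1) * n₂ ≤ (x + y + w) * n₂ := Nat.mul_le_mul_right _ hL'
    subst h₂ h₃
    nlinarith
  rw [hlong, card_filter_snd_le_fst hn₁ hn₂ (by omega) (by omega)]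
  refine congrArg card (filter_congr fun ⟨w, y, u⟩ ht => ?_)
  rw [hmem'] at ht
  simp only [len]
  have hd' : (0 : ℝ) < d := by exact_mod_cast hd
  have ht' : ((2 * w + y : ℕ) : ℝ) * d + ((w + u + y + w : ℕ) : ℝ) * n₁ = n := by
    rw [← ht]; subst h₂; push_cast; ring
  rw [lt_div_iff₀ hd', ← Nat.cast_lt (α := ℝ),
    ← mul_lt_mul_iff_left₀ (by positivity : (0 : ℝ) < n₁)]
  constructor <;> intro h <;> linarith

theorem isBigO_card_Zf_sub_sq (hn₁ : 0 < n₁) (h₂ : n₂ = n₁ + d) (h₃ : n₃ = n₂ + d)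
    (hcop : Nat.Coprime n₁ d) :
    (fun n : ℕ => (#(Zf n₁ n₂ n₃ n) : ℝ) - (2 * n₁ * n₂ * n₃ : ℝ)⁻¹ * n ^ 2) =O[atTop]
      (fun n => (n : ℝ)) := by
  have hn₂ : 0 < n₂ := by omega
  have hn₃ : 0 < n₃ := by omega
  have hcop₁ : Nat.Coprime n₁ n₂ := h₂ ▸ Nat.coprime_self_add_right.2 hcop
  have hcop₃ : Nat.Coprime n₃ n₂ := by
    rw [h₃, Nat.coprime_self_add_left, h₂, Nat.coprime_add_self_right]; exact hcop.symm
  have hdiag : (fun n : ℕ => (#{z ∈ Zf n₁ n₂ n₃ n | z.1 = z.2.2} : ℝ)) =O[atTop]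
      (fun n => (n : ℝ)) :=
    isBigO_natCast_of_abs_le 1 fun n => by
      rw [Nat.abs_cast, one_mul]; exact_mod_cast card_filter_fst_eq_snd_le hn₂
  refine (((isBigO_card_Zf_two_mul hn₁ hn₂ hcop₁).add
    (isBigO_card_Zf_two_mul hn₃ hn₂ hcop₃)).sub hdiag).congr_left fun n => ?_
  have hsum := card_Zf_add_card_filter_fst_eq_snd hn₁ hn₂ hn₃ (n := n) (by omega)
  have hsum' : (#(Zf n₁ n₂ n₃ n) : ℝ) + #{z ∈ Zf n₁ n₂ n₃ n | z.1 = z.2.2} =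
      #(Zf (2 * n₂) n₂ n₁ n) + #(Zf (2 * n₂) n₂ n₃ n) := by exact_mod_cast hsum
  have hg : (n₁ : ℝ) + n₃ = 2 * n₂ := by subst h₂ h₃; push_cast; ring
  have : (2 * n₁ * n₂ * n₃ : ℝ)⁻¹ * n ^ 2 =
      n ^ 2 / (4 * n₁ * n₂ ^ 2) + n ^ 2 / (4 * n₃ * n₂ ^ 2) := by
    have : (0 : ℝ) < n₁ := by exact_mod_cast hn₁
    have : (0 : ℝ) < n₂ := by exact_mod_cast hn₂
    have : (0 : ℝ) < n₃ := by exact_mod_cast hn₃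
    rw [inv_mul_eq_div, div_add_div _ _ (by positivity) (by positivity),
      div_eq_div_iff (by positivity) (by positivity)]
    linear_combination (-(8 * (n : ℝ) ^ 2 * n₁ * n₂ ^ 3 * n₃)) * hg
  rw [this]
  linarith

theorem abs_card_filter_lt_len_sub_le {n L : ℕ} (hn₁ : 0 < n₁) (hd : 0 < d)
    (h₂ : n₂ = n₁ + d) (h₃ : n₃ = n₂ + d) (hcop : Nat.Coprime n₁ d) (hL : n ≤ (L + 1) * n₂)
    (hLn : L * n₁ ≤ n) :
    |(#{z ∈ Zf n₁ n₂ n₃ n | L < len z} : ℝ) - ((n - L * n₁) / d) ^ 2 / (4 * n₁)| ≤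
      ((n₁ : ℝ) + 1) * (n + 2) := by
  have hn₂ : 0 < n₂ := by omega
  have h₁' : (0 : ℝ) < n₁ := by exact_mod_cast hn₁
  have hd' : (1 : ℝ) ≤ d := by exact_mod_cast hd
  have hL' : (n : ℝ) ≤ (L + 1) * n₂ := by exact_mod_cast hL
  have hn₂d : (n₂ : ℝ) = n₁ + d := by exact_mod_cast h₂
  rw [card_filter_lt_len hn₁ hd h₂ h₃ hL]
  refine abs_card_filter_lt_sub_sq_le hn₁ hn₂ (h₂ ▸ Nat.coprime_self_add_right.2 hcop)
    (div_nonneg (by rw [sub_nonneg]; exact_mod_cast hLn) (by positivity)) ?_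
  rw [div_mul_eq_mul_div, div_le_iff₀ (by positivity)]
  have : (n₁ : ℝ) * (n - L * n₂) ≤ n₁ * (n₂ * d) :=
    mul_le_mul_of_nonneg_left (by nlinarith) h₁'.le
  nlinarith

theorem isBigO_card_filter_floor_lt_len (hn₁ : 0 < n₁) (hd : 0 < d) (h₂ : n₂ = n₁ + d)
    (h₃ : n₃ = n₂ + d) (hcop : Nat.Coprime n₁ d) {τ : ℝ} (hτ₂ : 1 / n₂ ≤ τ) (hτ₁ : τ ≤ 1 / n₁) :
    (fun n : ℕ => (#{z ∈ Zf n₁ n₂ n₃ n | ⌊τ * n⌋₊ < len z} : ℝ) -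
      (1 - τ * n₁) ^ 2 / (4 * n₁ * d ^ 2) * n ^ 2) =O[atTop] (fun n => (n : ℝ)) := by
  have h₁' : (0 : ℝ) < n₁ := by exact_mod_cast hn₁
  have h₂' : (0 : ℝ) < n₂ := by rw [h₂]; positivity
  have hd' : (1 : ℝ) ≤ d := by exact_mod_cast hd
  have hτ : 0 ≤ τ := le_trans (by positivity) hτ₂
  have hτn₂ : 1 ≤ τ * n₂ := (div_le_iff₀ h₂').1 hτ₂
  have hτn₁ : τ * n₁ ≤ 1 := (le_div_iff₀ h₁').1 hτ₁
  refine isBigO_natCast_of_abs_le (4 * (n₁ + 2)) fun n => ?_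
  set L := ⌊τ * n⌋₊
  have hL : (L : ℝ) ≤ τ * n := Nat.floor_le (by positivity)
  have hL' : τ * n < L + 1 := Nat.lt_floor_add_one _
  have hcount := abs_card_filter_lt_len_sub_le (n := n) (L := L) hn₁ hd h₂ h₃ hcop
    (by exact_mod_cast (by nlinarith : (n : ℝ) ≤ (L + 1) * n₂))
    (by exact_mod_cast (by nlinarith : (L : ℝ) * n₁ ≤ n))
  set V : ℝ := (n - L * n₁) / d
  set W : ℝ := n * (1 - τ * n₁) / d
  -- `V - W = (τ n - L) n₁ / d` lies in `[0, n₁)`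
  have hW0 : 0 ≤ W := by have := hτn₁; positivity
  have hWV : W ≤ V := div_le_div_of_nonneg_right (by nlinarith) (by positivity)
  have hVW : V ≤ W + n₁ := by
    rw [div_add' _ _ _ (by positivity), div_le_div_iff_of_pos_right (by positivity)]
    nlinarith
  have hWn : W ≤ n := by
    simp only [W]; rw [div_le_iff₀ (by positivity)]; nlinarith
  have hsq : |V ^ 2 / (4 * n₁) - (1 - τ * n₁) ^ 2 / (4 * n₁ * d ^ 2) * n ^ 2| ≤
      ((n₁ : ℝ) + 2) * (n + 1) := by
    rw [show (1 - τ * n₁) ^ 2 / (4 * n₁ * d ^ 2) * n ^ 2 = W ^ 2 / (4 * n₁) by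
      simp only [W]; field_simp, ← sub_div, abs_div, abs_of_pos (by positivity : (0 : ℝ) < 4 * n₁),
      div_le_iff₀ (by positivity)]
    have := abs_sq_sub_sq_le (c := n₁) (by linarith) hW0 (abs_le.2 ⟨by linarith, by linarith⟩) hWn
    have : (0 : ℝ) ≤ n₁ * n := by positivity
    nlinarith
  calc _ ≤ |(#{z ∈ Zf n₁ n₂ n₃ n | L < len z} : ℝ) - V ^ 2 / (4 * n₁)| +
        |V ^ 2 / (4 * n₁) - (1 - τ * n₁) ^ 2 / (4 * n₁ * d ^ 2) * n ^ 2| := abs_sub_le _ _ _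
    _ ≤ ((n₁ : ℝ) + 1) * (n + 2) + (n₁ + 2) * (n + 1) := add_le_add hcount hsq
    _ ≤ _ := by nlinarith

lemma sq_div_sqrt_div_eq_inv (hn₁ : 0 < n₁) (hd : 0 < d) (h₂ : n₂ = n₁ + d) (h₃ : n₃ = n₂ + d) :
    (d / √(n₂ * n₃) : ℝ) ^ 2 / (2 * n₁ * d ^ 2) = (2 * n₁ * n₂ * n₃ : ℝ)⁻¹ := by
  have : (0 : ℝ) < n₂ := by rw [h₂]; positivity
  have : (0 : ℝ) < n₃ := by rw [h₃]; positivity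
  have : (0 : ℝ) < d := by exact_mod_cast hd
  have : (0 : ℝ) < n₁ := by exact_mod_cast hn₁
  rw [div_pow, Real.sq_sqrt (by positivity)]
  field_simp

lemma one_sub_div_sqrt_div_mem_Ioo (hn₁ : 0 < n₁) (hd : 0 < d) (h₂ : n₂ = n₁ + d)
    (h₃ : n₃ = n₂ + d) :
    (1 - d / √(n₂ * n₃)) / n₁ ∈ Set.Ioo (1 / (n₂ : ℝ)) (1 / n₁) := by
  have h₁' : (0 : ℝ) < n₁ := by exact_mod_cast hn₁
  have hd' : (0 : ℝ) < d := by exact_mod_cast hd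
  have h₂' : (n₂ : ℝ) = n₁ + d := by exact_mod_cast h₂
  have h₃' : (n₃ : ℝ) = n₂ + d := by exact_mod_cast h₃
  have hn₂ : (0 : ℝ) < n₂ := by rw [h₂']; positivity
  have hsqrt : (n₂ : ℝ) < √(n₂ * n₃) := by
    rw [Real.lt_sqrt hn₂.le]
    nlinarith
  have hsqrt₀ : 0 < √(n₂ * n₃) := hn₂.trans hsqrt
  constructor
  · rw [div_lt_div_iff₀ hn₂ h₁', one_mul, sub_mul, div_mul_eq_mul_div, lt_sub_comm,
      div_lt_iff₀ hsqrt₀]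
    nlinarith
  · exact div_lt_div_of_pos_right (sub_lt_self _ (div_pos hd' hsqrt₀)) h₁'

theorem eventually_lt_medianLen (hn₁ : 0 < n₁) (hd : 0 < d) (h₂ : n₂ = n₁ + d) (h₃ : n₃ = n₂ + d)
    (hcop : Nat.Coprime n₁ d) {τ : ℝ} (hτ₂ : 1 / n₂ ≤ τ) (hτ : τ < (1 - d / √(n₂ * n₃)) / n₁) :
    ∀ᶠ n : ℕ in atTop, τ * n - 1 < medianLen n₁ n₂ n₃ n := by
  have h₁' : (0 : ℝ) < n₁ := by exact_mod_cast hn₁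
  have hτ₁ : τ ≤ 1 / n₁ := (hτ.trans (one_sub_div_sqrt_div_mem_Ioo hn₁ hd h₂ h₃).2).le
  have hT := isBigO_card_filter_floor_lt_len hn₁ hd h₂ h₃ hcop hτ₂ hτ₁
  refine (eventually_lt_of_isBigO_sub (isBigO_card_Zf_sub_sq hn₁ h₂ h₃ hcop)
    (g := fun n => 2 * (#{z ∈ Zf n₁ n₂ n₃ n | ⌊τ * n⌋₊ < len z} : ℝ))
    (β := 2 * ((1 - τ * n₁) ^ 2 / (4 * n₁ * d ^ 2)))
    ((hT.const_mul_left 2).congr_left fun n => by ring) ?_).mono fun n hn => ?_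
  · have hs : 0 ≤ d / √(n₂ * n₃) := by positivity
    rw [← sq_div_sqrt_div_eq_inv hn₁ hd h₂ h₃, show ∀ x : ℝ, 2 * (x / (4 * n₁ * d ^ 2)) =
      x / (2 * n₁ * d ^ 2) from fun x => by ring]
    have hd' : (0 : ℝ) < d := by exact_mod_cast hd
    refine div_lt_div_of_pos_right (pow_lt_pow_left₀ ?_ hs two_ne_zero) (by positivity)
    rw [lt_div_iff₀ h₁'] at hτ
    linarith
  · have := lt_medianLen_of_card_lt (L := ⌊τ * n⌋₊) (by exact_mod_cast hn)
    have hfl : τ * n - 1 < ⌊τ * n⌋₊ := by linarith [Nat.lt_floor_add_one (τ * n)]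
    exact lt_trans hfl (by exact_mod_cast this)

theorem eventually_medianLen_le (hn₁ : 0 < n₁) (hd : 0 < d) (h₂ : n₂ = n₁ + d) (h₃ : n₃ = n₂ + d)
    (hcop : Nat.Coprime n₁ d) {τ : ℝ} (hτ : (1 - d / √(n₂ * n₃)) / n₁ < τ) (hτ₁ : τ ≤ 1 / n₁) :
    ∀ᶠ n : ℕ in atTop, medianLen n₁ n₂ n₃ n ≤ τ * n := by
  have h₁' : (0 : ℝ) < n₁ := by exact_mod_cast hn₁
  have hd' : (0 : ℝ) < d := by exact_mod_cast hd
  have hn₂ : (0 : ℝ) < n₂ := by rw [h₂]; positivity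
  have hn₃ : (0 : ℝ) < n₃ := by rw [h₃]; positivity
  have hτ₂ : 1 / n₂ ≤ τ := ((one_sub_div_sqrt_div_mem_Ioo hn₁ hd h₂ h₃).1.trans hτ).le
  have hT := isBigO_card_filter_floor_lt_len hn₁ hd h₂ h₃ hcop hτ₂ hτ₁
  have hconst : (fun _ : ℕ => (2 : ℝ)) =O[atTop] (fun n => (n : ℝ)) :=
    ((isLittleO_const_id_atTop (2 : ℝ)).comp_tendsto tendsto_natCast_atTop_atTop).isBigO
  refine (eventually_lt_of_isBigO_sub
    (f := fun n => 2 * (#{z ∈ Zf n₁ n₂ n₃ n | ⌊τ * n⌋₊ < len z} : ℝ) + 2)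
    (α := 2 * ((1 - τ * n₁) ^ 2 / (4 * n₁ * d ^ 2)))
    (((hT.const_mul_left 2).add hconst).congr_left fun n => by ring)
    (isBigO_card_Zf_sub_sq hn₁ h₂ h₃ hcop) ?_).mono fun n hn => ?_
  · have hs : 0 ≤ d / √(n₂ * n₃) := by positivity
    rw [← sq_div_sqrt_div_eq_inv hn₁ hd h₂ h₃, show ∀ x : ℝ, 2 * (x / (4 * n₁ * d ^ 2)) =
      x / (2 * n₁ * d ^ 2) from fun x => by ring]
    refine div_lt_div_of_pos_right (pow_lt_pow_left₀ ?_ ?_ two_ne_zero) (by positivity)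
    · rw [div_lt_iff₀ h₁'] at hτ
      linarith
    · rw [le_div_iff₀ h₁'] at hτ₁
      linarith
  · have := medianLen_le_of_card_le (L := ⌊τ * n⌋₊) (by exact_mod_cast hn.le)
    have hfl : (⌊τ * n⌋₊ : ℝ) ≤ τ * n := Nat.floor_le (by
      have : 0 < τ := lt_of_lt_of_le (by positivity) hτ₂
      positivity)
    exact le_trans (by exact_mod_cast this) hfl

theorem tendsto_medianLen_div (hn₁ : 0 < n₁) (hd : 0 < d) (h₂ : n₂ = n₁ + d)
    (h₃ : n₃ = n₂ + d) (hcop : Nat.Coprime n₁ d) :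
    Tendsto (fun n : ℕ => (medianLen n₁ n₂ n₃ n : ℝ) / n) atTop
      (𝓝 ((1 - d / √(n₂ * n₃)) / n₁)) := by
  obtain ⟨hx₂, hx₁⟩ := one_sub_div_sqrt_div_mem_Ioo hn₁ hd h₂ h₃
  set x := (1 - d / √(n₂ * n₃)) / n₁
  refine tendsto_order.2 ⟨fun a ha => ?_, fun b hb => ?_⟩
  · set τ := (max a (1 / n₂) + x) / 2 with hτ
    have hτa : a < τ := by have := le_max_left a (1 / (n₂ : ℝ)); linarith [hτ]
    have hτ₂ : 1 / n₂ ≤ τ := by have := le_max_right a (1 / (n₂ : ℝ)); linarith [hτ]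
    have hτx : τ < x := by have := max_lt ha hx₂; linarith [hτ]
    filter_upwards [eventually_lt_medianLen hn₁ hd h₂ h₃ hcop hτ₂ hτx,
      eventually_gt_atTop ⌈1 / (τ - a)⌉₊] with n hn hN
    have hN' : 1 / (τ - a) < n := Nat.lt_of_ceil_lt hN
    have hn₀ : (0 : ℝ) < n := lt_of_le_of_lt (by have := hτa; positivity) hN'
    rw [div_lt_iff₀ (by linarith)] at hN'
    rw [lt_div_iff₀ hn₀]
    nlinarith
  · set τ := (min b (1 / n₁) + x) / 2 with hτ
    have hτb : τ < b := by have := min_le_left b (1 / (n₁ : ℝ)); linarith [hτ]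
    have hτ₁ : τ ≤ 1 / n₁ := by have := min_le_right b (1 / (n₁ : ℝ)); linarith [hτ]
    have hxτ : x < τ := by have := lt_min hb hx₁; linarith [hτ]
    filter_upwards [eventually_medianLen_le hn₁ hd h₂ h₃ hcop hxτ hτ₁,
      eventually_gt_atTop 0] with n hn hn₀
    have hn₀ : (0 : ℝ) < n := by exact_mod_cast hn₀
    rw [div_lt_iff₀ hn₀]
    nlinarith

end ArithmeticSequence

lemma one_sub_div_sqrt_div_eq_of_sq_add_sq {a b c : ℕ} (hb : 0 < b) (hba : b < a)
    (h : a ^ 2 + b ^ 2 = c ^ 2) :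
    (1 - ((b ^ 2 : ℕ) : ℝ) / √(((a ^ 2 : ℕ) : ℝ) * ((a ^ 2 + b ^ 2 : ℕ) : ℝ))) /
        ((a ^ 2 - b ^ 2 : ℕ) : ℝ) =
      1 / ((a ^ 2 - b ^ 2 : ℕ) : ℝ) * (1 - c / (2 * a)) +
        1 / ((a ^ 2 + b ^ 2 : ℕ) : ℝ) * (c / (2 * a)) := by
  have ha : (0 : ℝ) < a := by exact_mod_cast hb.trans hba
  have hc : (0 : ℝ) < c := by exact_mod_cast Nat.pos_of_ne_zero (by rintro rfl; simp at h; omega)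
  have hab : ((a ^ 2 - b ^ 2 : ℕ) : ℝ) = a ^ 2 - b ^ 2 := by
    rw [Nat.cast_sub (Nat.pow_le_pow_left hba.le 2)]; push_cast; ring
  have hab₀ : (a : ℝ) ^ 2 - b ^ 2 ≠ 0 := by
    rw [← hab, Nat.cast_ne_zero]; have := Nat.pow_lt_pow_left hba two_ne_zero; omega
  have hc₂ : ((a ^ 2 + b ^ 2 : ℕ) : ℝ) = c ^ 2 := by rw [h]; push_cast; ring
  rw [hc₂, hab]
  push_cast
  rw [← mul_pow, Real.sqrt_sq (by positivity)]
  field_simp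
  linear_combination (-1 : ℝ) * (by exact_mod_cast h : (a : ℝ) ^ 2 + b ^ 2 = c ^ 2)

/-- For a primitive Pythagorean triple a² + b² = c² with b < a, setting
n₁ = a² − b², n₂ = a², n₃ = a² + b² = c² gives a numerical semigroup whose fulcrum
constant is F = (a² − b²)/(2a²) < 1/2 and whose asymptotic median constant is the
rational number (1/(a²−b²))(1 − c/(2a)) + (1/(a²+b²))(c/(2a)). -/
theorem pythagorean_triple_rational_median (a b c : ℕ) (hb : 0 < b) (hba : b < a)
    (hpyth : a ^ 2 + b ^ 2 = c ^ 2) (hcop : Nat.gcd a b = 1)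
    (n₁ n₂ n₃ : ℕ) (e₁ : n₁ = a ^ 2 - b ^ 2) (e₂ : n₂ = a ^ 2) (e₃ : n₃ = a ^ 2 + b ^ 2)
    (F : ℚ) (hF : F = ((n₁ : ℚ) * ((n₃ : ℚ) - (n₂ : ℚ))) / ((n₂ : ℚ) * ((n₃ : ℚ) - (n₁ : ℚ)))) :
    0 < n₁ ∧ n₁ < n₂ ∧ n₂ < n₃ ∧ Nat.gcd n₁ (Nat.gcd n₂ n₃) = 1 ∧
    F = ((a : ℚ) ^ 2 - (b : ℚ) ^ 2) / (2 * (a : ℚ) ^ 2) ∧ F < 1 / 2 ∧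
    ∀ ε : ℝ, 0 < ε → ∃ N : ℕ, ∀ n : ℕ, inS n₁ n₂ n₃ n → N ≤ n →
      |(medianLen n₁ n₂ n₃ n : ℝ) / (n : ℝ) -
        ((1 / (n₁ : ℝ)) * (1 - (c : ℝ) / (2 * (a : ℝ))) +
          (1 / (n₃ : ℝ)) * ((c : ℝ) / (2 * (a : ℝ))))| < ε := by
  subst e₁ e₂ e₃
  have hb2 : b ^ 2 < a ^ 2 := Nat.pow_lt_pow_left hba two_ne_zero
  have hb0 : 0 < b ^ 2 := pow_pos hb 2
  have hab : Nat.Coprime (a ^ 2) (b ^ 2) := Nat.Coprime.pow 2 2 hcop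
  have ha : (0 : ℚ) < a := by exact_mod_cast hb.trans hba
  have hb' : (0 : ℚ) < b := by exact_mod_cast hb
  have hFval : F = ((a : ℚ) ^ 2 - b ^ 2) / (2 * a ^ 2) := by
    rw [hF, Nat.cast_sub hb2.le]
    push_cast
    field_simp
    ring
  refine ⟨by omega, by omega, by omega, ?_, hFval, ?_, fun ε hε => ?_⟩
  · rw [Nat.Coprime.gcd_eq_one (Nat.coprime_self_add_right.2 hab), Nat.gcd_one_right]
  · rw [hFval, div_lt_iff₀ (by positivity)]
    nlinarith
  have hcop' : Nat.Coprime (a ^ 2 - b ^ 2) (b ^ 2) := by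
    rwa [← Nat.coprime_add_self_left, Nat.sub_add_cancel hb2.le]
  obtain ⟨N, hN⟩ := Metric.tendsto_atTop.1
    (tendsto_medianLen_div (n₂ := a ^ 2) (by omega) hb0 (by omega) rfl hcop') ε hε
  refine ⟨N, fun n _ hn => ?_⟩
  rw [← one_sub_div_sqrt_div_eq_of_sq_add_sq hb hba hpyth]
  exact hN n hn
end

section
/- Let d ≥ 2 be a square-free positive integer, let t be a positive integer, and set p = ⌊t√d⌋. Suppose p is prime and p > max(2, d). Then the integer ℓ = t²d − p² satisfies 1 ≤ ℓ ≤ 2p, p does not divide ℓ, and consequently, setting n₁ = p² − ℓ, n₂ = p², n₃ = p² + ℓ, one has 0 < n₁ < n₂ < n₃ and gcd(n₁, n₂, n₃) = 1. -/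
/-- If d ≥ 2 is square-free, T ≥ 1, and p = ⌊T√d⌋ is a prime exceeding max(2, d), then
ℓ = T²d − p² satisfies 1 ≤ ℓ ≤ 2p and p ∤ ℓ; consequently n₁ = p² − ℓ, n₂ = p²,
n₃ = p² + ℓ satisfy 0 < n₁ < n₂ < n₃ and gcd(n₁, n₂, n₃) = 1. -/
theorem floor_multiple_sqrt_prime_construction (d T p : ℕ) (hd : 2 ≤ d)
    (hsf : Squarefree d) (hT : 0 < T)
    (hp : p = ⌊(T : ℝ) * Real.sqrt (d : ℝ)⌋₊) (hprime : p.Prime)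
    (hgt : max 2 d < p)
    (ℓ : ℕ) (hℓ : ℓ = T ^ 2 * d - p ^ 2) :
    1 ≤ ℓ ∧ ℓ ≤ 2 * p ∧ ¬ p ∣ ℓ ∧
    0 < p ^ 2 - ℓ ∧ p ^ 2 - ℓ < p ^ 2 ∧ p ^ 2 < p ^ 2 + ℓ ∧
    Nat.gcd (p ^ 2 - ℓ) (Nat.gcd (p ^ 2) (p ^ 2 + ℓ)) = 1 := by
  have hdp : d < p := lt_of_le_of_lt (le_max_right 2 d) hgt
  have h2p : 2 < p := lt_of_le_of_lt (le_max_left 2 d) hgt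
  have hd0 : (0:ℝ) ≤ (d:ℝ) := by positivity
  have hs : Real.sqrt (d:ℝ) ^ 2 = (d:ℝ) := Real.sq_sqrt hd0
  have h1 : (p:ℝ) ≤ (T:ℝ) * Real.sqrt (d:ℝ) := by
    rw [hp]; exact Nat.floor_le (by positivity)
  have h2 : (T:ℝ) * Real.sqrt (d:ℝ) < (p:ℝ) + 1 := by
    rw [hp]; exact Nat.lt_floor_add_one _
  have hle : p ^ 2 ≤ T ^ 2 * d := by
    have hr : (p:ℝ) ^ 2 ≤ (T:ℝ) ^ 2 * (d:ℝ) := by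
      nlinarith [Real.sqrt_nonneg (d:ℝ), (Nat.cast_nonneg p : (0:ℝ) ≤ (p:ℝ))]
    exact_mod_cast hr
  have hlt : T ^ 2 * d < (p + 1) ^ 2 := by
    have hr : (T:ℝ) ^ 2 * (d:ℝ) < ((p:ℝ) + 1) ^ 2 := by
      nlinarith [Real.sqrt_nonneg (d:ℝ)]
    have : ((T ^ 2 * d : ℕ) : ℝ) < (((p + 1) ^ 2 : ℕ) : ℝ) := by push_cast; linarith
    exact_mod_cast this
  have hne : T ^ 2 * d ≠ p ^ 2 := by
    intro h
    have hdvd : d ∣ p ^ 2 := ⟨T ^ 2, by rw [← h]; ring⟩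
    have hdvdp : d ∣ p := (hsf.dvd_pow_iff_dvd two_ne_zero).mp hdvd
    rcases (Nat.Prime.eq_one_or_self_of_dvd hprime d hdvdp) with h1' | h1'
    · omega
    · omega
  have hexp : (p + 1) ^ 2 = p ^ 2 + 2 * p + 1 := by ring
  have hl1 : 1 ≤ ℓ := by omega
  have hl2 : ℓ ≤ 2 * p := by omega
  have hsq : T ^ 2 * d = p ^ 2 + ℓ := by omega
  have hpp : 2 * p < p ^ 2 := by nlinarith
  have hnd : ¬ p ∣ ℓ := by
    intro hdl
    have h1d : p ∣ T ^ 2 * d := by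
      rw [hsq]; exact Dvd.dvd.add (dvd_pow_self p two_ne_zero) hdl
    have hpd : ¬ p ∣ d := fun h => by
      have := Nat.le_of_dvd (by omega) h; omega
    have hpT2 : p ∣ T ^ 2 := ((Nat.Prime.dvd_mul hprime).mp h1d).resolve_right hpd
    have hpT : p ∣ T := hprime.dvd_of_dvd_pow hpT2
    have hp2 : p ^ 2 ∣ T ^ 2 := pow_dvd_pow_of_dvd hpT 2
    have hp2l : p ^ 2 ∣ ℓ := by
      have : p ^ 2 ∣ T ^ 2 * d := hp2.mul_right d
      rw [hsq] at this
      exact (Nat.dvd_add_right (dvd_refl _)).mp this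
    have := Nat.le_of_dvd (by omega) hp2l
    omega
  refine ⟨hl1, hl2, hnd, by omega, by omega, by omega, ?_⟩
  have hco : Nat.Coprime p ℓ := (Nat.Prime.coprime_iff_not_dvd hprime).mpr hnd
  have hco2 : Nat.Coprime (p ^ 2) ℓ := Nat.Coprime.pow_left 2 hco
  have hg : Nat.gcd (p ^ 2) (p ^ 2 + ℓ) = 1 := by
    have : Nat.Coprime (p ^ 2) (ℓ + p ^ 2) := (Nat.coprime_add_self_right).mpr hco2
    simpa [Nat.add_comm] using this
  rw [hg, Nat.gcd_one_right]
end
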